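/- arXiv:2202.09210 — 5 statements merged into one kernel-verified Lean document; each statement's English description precedes it below -/
import Mathlib

section
/- Consider a hedonic game on agent set N = {R, B} ∪ Grn ∪ Q, where R ≠ B, Grn is a nonempty finite set of green agents, Q is a (possibly empty) set of further agents, and {R}, {B}, Grn, Q are pairwise disjoint. Let M_G be a collection of coalitions, each of which contains at least one agent of Q and contains neither R nor B, and assume the agents R, B and the green agents have the trap-gadget preferences with respect to M_G. Then every outcome Π in which some green agent's coalition does not belong to M_G admits an IS-deviation; in particular, such an outcome is neither individually stable nor Nash stable. -/
/-- Strict preference derived from a weak preference relation. -/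
def SPref {α : Type*} (pref : α → Finset α → Finset α → Prop)
    (i : α) (X Y : Finset α) : Prop :=
  pref i X Y ∧ ¬ pref i Y X

/-- An outcome: a partition of the agents into nonempty coalitions. -/
def IsOutcome {α : Type*} [Fintype α] [DecidableEq α] (Part : Finset (Finset α)) : Prop :=
  (∀ C ∈ Part, C.Nonempty) ∧
  (∀ C ∈ Part, ∀ D ∈ Part, C ≠ D → Disjoint C D) ∧
  (∀ i : α, ∃ C ∈ Part, i ∈ C)

/-- Nash stability. -/
def NashStable {α : Type*} [DecidableEq α] (pref : α → Finset α → Finset α → Prop)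
    (Part : Finset (Finset α)) : Prop :=
  ∀ i : α, ∀ Ci ∈ Part, i ∈ Ci →
    ∀ C : Finset α, (C ∈ Part ∨ C = ∅) → C ≠ Ci →
      ¬ SPref pref i (insert i C) Ci

/-- Individual stability. -/
def IndStable {α : Type*} [DecidableEq α] (pref : α → Finset α → Finset α → Prop)
    (Part : Finset (Finset α)) : Prop :=
  ∀ i : α, ∀ Ci ∈ Part, i ∈ Ci →
    ∀ C : Finset α, (C ∈ Part ∨ C = ∅) → C ≠ Ci →
      ¬ (SPref pref i (insert i C) Ci ∧ ∀ j ∈ C, pref j (insert i C) C)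

/-- Trap-gadget preferences of the agents `R`, `B` and the green agents `Grn`
with respect to a collection `MG` of coalitions. -/
structure TrapGadget {α : Type*} [DecidableEq α]
    (pref : α → Finset α → Finset α → Prop)
    (R B : α) (Grn : Finset α) (MG : Set (Finset α)) : Prop where
  /-- R strictly prefers {R,B} to every other coalition containing R. -/
  R_top : ∀ C : Finset α, R ∈ C → C ≠ {R, B} → SPref pref R {R, B} C
  /-- Among coalitions {R} ∪ S with ∅ ≠ S ⊆ Grn, R strictly prefers those with more
  green agents. -/
  R_green_mono : ∀ S T : Finset α, S.Nonempty → S ⊆ Grn → T.Nonempty → T ⊆ Grn →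
    T.card < S.card → SPref pref R (insert R S) (insert R T)
  /-- R strictly prefers each coalition {R} ∪ S with ∅ ≠ S ⊆ Grn to {R}. -/
  R_green_over_alone : ∀ S : Finset α, S.Nonempty → S ⊆ Grn →
    SPref pref R (insert R S) {R}
  /-- R strictly prefers {R} to every coalition containing R not of the above forms. -/
  R_alone_over_rest : ∀ C : Finset α, R ∈ C → C ≠ {R, B} → C ≠ {R} →
    (¬ ∃ S : Finset α, S.Nonempty ∧ S ⊆ Grn ∧ C = insert R S) →
    SPref pref R {R} C
  /-- Among coalitions {B} ∪ S with ∅ ≠ S ⊆ Grn, B strictly prefers those with more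
  green agents. -/
  B_green_mono : ∀ S T : Finset α, S.Nonempty → S ⊆ Grn → T.Nonempty → T ⊆ Grn →
    T.card < S.card → SPref pref B (insert B S) (insert B T)
  /-- B strictly prefers each coalition {B} ∪ S with ∅ ≠ S ⊆ Grn to {R,B}. -/
  B_green_over_RB : ∀ S : Finset α, S.Nonempty → S ⊆ Grn →
    SPref pref B (insert B S) {R, B}
  /-- B strictly prefers {R,B} to {B}. -/
  B_RB_over_alone : SPref pref B {R, B} {B}
  /-- B strictly prefers {B} to every other coalition containing B. -/
  B_alone_over_rest : ∀ C : Finset α, B ∈ C → C ≠ {R, B} → C ≠ {B} →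
    (¬ ∃ S : Finset α, S.Nonempty ∧ S ⊆ Grn ∧ C = insert B S) →
    SPref pref B {B} C
  /-- Every green agent strictly prefers every coalition of MG containing it to every
  coalition containing it that is not in MG. -/
  G_MG_top : ∀ g ∈ Grn, ∀ C ∈ MG, g ∈ C → ∀ C' : Finset α, g ∈ C' → C' ∉ MG →
    SPref pref g C C'
  /-- Among non-MG coalitions, a green agent g strictly prefers coalitions of the form
  {R} ∪ S with g ∈ S ⊆ Grn to coalitions of the form {B} ∪ S' with g ∈ S' ⊆ Grn. -/
  G_R_over_B : ∀ g ∈ Grn, ∀ S T : Finset α, g ∈ S → S ⊆ Grn → g ∈ T → T ⊆ Grn →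
    insert R S ∉ MG → insert B T ∉ MG → SPref pref g (insert R S) (insert B T)
  /-- ... strictly prefers those to coalitions S'' ⊆ Grn with g ∈ S''. -/
  G_B_over_G : ∀ g ∈ Grn, ∀ S T : Finset α, g ∈ S → S ⊆ Grn → g ∈ T → T ⊆ Grn →
    insert B S ∉ MG → T ∉ MG → SPref pref g (insert B S) T
  /-- ... and strictly prefers those to all remaining coalitions containing g. -/
  G_G_over_rest : ∀ g ∈ Grn, ∀ S C : Finset α, g ∈ S → S ⊆ Grn → S ∉ MG →
    g ∈ C → C ∉ MG →
    (¬ ∃ T : Finset α, g ∈ T ∧ T ⊆ Grn ∧ (C = T ∨ C = insert R T ∨ C = insert B T)) →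
    SPref pref g S C
  /-- Within the form {R} ∪ S, a green agent strictly prefers coalitions with more
  green agents. -/
  G_R_mono : ∀ g ∈ Grn, ∀ S T : Finset α, g ∈ S → S ⊆ Grn → g ∈ T → T ⊆ Grn →
    insert R S ∉ MG → insert R T ∉ MG → T.card < S.card →
    SPref pref g (insert R S) (insert R T)
  /-- Within the form {B} ∪ S', a green agent strictly prefers coalitions with more
  green agents. -/
  G_B_mono : ∀ g ∈ Grn, ∀ S T : Finset α, g ∈ S → S ⊆ Grn → g ∈ T → T ⊆ Grn →
    insert B S ∉ MG → insert B T ∉ MG → T.card < S.card →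
    SPref pref g (insert B S) (insert B T)
  /-- Within the form S'', a green agent strictly prefers coalitions with more
  green agents. -/
  G_G_mono : ∀ g ∈ Grn, ∀ S T : Finset α, g ∈ S → S ⊆ Grn → g ∈ T → T ⊆ Grn →
    S ∉ MG → T ∉ MG → T.card < S.card → SPref pref g S T

/-- In a hedonic game with trap-gadget preferences, every outcome in which
some green agent's coalition does not belong to MG admits an IS-deviation; in particular
it is neither individually stable nor Nash stable. -/
theorem trapGadget_forces_MG {α : Type*} [Fintype α] [DecidableEq α]
    (pref : α → Finset α → Finset α → Prop)
    (R B : α) (Grn Q : Finset α)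
    (hRB : R ≠ B) (hGrn : Grn.Nonempty)
    (hRGrn : R ∉ Grn) (hBGrn : B ∉ Grn) (hRQ : R ∉ Q) (hBQ : B ∉ Q)
    (hGrnQ : Disjoint Grn Q)
    (hcover : ∀ x : α, x = R ∨ x = B ∨ x ∈ Grn ∨ x ∈ Q)
    (MG : Set (Finset α))
    (hMG : ∀ C ∈ MG, (C ∩ Q).Nonempty ∧ R ∉ C ∧ B ∉ C)
    (htrap : TrapGadget pref R B Grn MG)
    (htot : ∀ (a : α) (X Y : Finset α), a ∈ X → a ∈ Y → pref a X Y ∨ pref a Y X)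
    (htrans : ∀ (a : α) (X Y Z : Finset α), pref a X Y → pref a Y Z → pref a X Z)
    (Part : Finset (Finset α)) (hPart : IsOutcome Part)
    (g : α) (hg : g ∈ Grn) (Cg : Finset α) (hCg : Cg ∈ Part) (hgCg : g ∈ Cg)
    (hCgMG : Cg ∉ MG) :
    ¬ IndStable pref Part ∧ ¬ NashStable pref Part := by
  obtain ⟨hne, hdisj, hcov⟩ := hPart
  have huniq : ∀ (x : α) (C D : Finset α), C ∈ Part → D ∈ Part → x ∈ C → x ∈ D → C = D := by
    intro x C D hC hD hxC hxD
    by_contra h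
    exact (Finset.disjoint_left.mp (hdisj C hC D hD h) hxC) hxD
  have sptrans : ∀ (a : α) (X Y Z : Finset α), SPref pref a X Y → SPref pref a Y Z →
      SPref pref a X Z := by
    rintro a X Y Z ⟨h1, h2⟩ ⟨h3, h4⟩
    exact ⟨htrans a X Y Z h1 h3, fun h => h4 (htrans a Z X Y h h1)⟩
  have hMG_R : ∀ C : Finset α, R ∈ C → C ∉ MG := fun C h hm => (hMG C hm).2.1 h
  have hMG_B : ∀ C : Finset α, B ∈ C → C ∉ MG := fun C h hm => (hMG C hm).2.2 h
  have hMG_G : ∀ C : Finset α, C ⊆ Grn → C ∉ MG := by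
    intro C hCsub hm
    obtain ⟨x, hx⟩ := (hMG C hm).1
    rw [Finset.mem_inter] at hx
    exact Finset.disjoint_left.mp hGrnQ (hCsub hx.1) hx.2
  have hgR : g ≠ R := fun h => hRGrn (h ▸ hg)
  have hgB : g ≠ B := fun h => hBGrn (h ▸ hg)
  obtain ⟨CR, hCR, hRCR⟩ := hcov R
  obtain ⟨CB, hCB, hBCB⟩ := hcov B
  suffices hdev : ∃ i : α, ∃ Ci ∈ Part, i ∈ Ci ∧ ∃ C : Finset α,
      (C ∈ Part ∨ C = ∅) ∧ C ≠ Ci ∧ SPref pref i (insert i C) Ci ∧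
      ∀ j ∈ C, pref j (insert i C) C by
    obtain ⟨i, Ci, hCi, hiCi, C, hC, hCn, hsp, hwel⟩ := hdev
    constructor
    · intro h; exact h i Ci hCi hiCi C hC hCn ⟨hsp, hwel⟩
    · intro h; exact h i Ci hCi hiCi C hC hCn hsp
  by_cases hform : ∃ T : Finset α, g ∈ T ∧ T ⊆ Grn ∧
      (Cg = T ∨ Cg = insert R T ∨ Cg = insert B T)
  swap
  · -- g deviates to the empty coalition
    refine ⟨g, Cg, hCg, hgCg, ∅, Or.inr rfl, Ne.symm (hne Cg hCg).ne_empty, ?_, ?_⟩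
    · have := htrap.G_G_over_rest g hg {g} Cg (Finset.mem_singleton_self g)
        (Finset.singleton_subset_iff.mpr hg)
        (hMG_G {g} (Finset.singleton_subset_iff.mpr hg)) hgCg hCgMG hform
      simpa using this
    · intro j hj; exact absurd hj (Finset.notMem_empty j)
  obtain ⟨T, hgT, hTG, hor⟩ := hform
  rcases hor with hCgT | hCgR | hCgB
  · -- Case A : Cg = T ⊆ Grn
    have hRCg : R ∉ Cg := fun h => hRGrn (hTG (hCgT ▸ h))
    have hBCg : B ∉ Cg := fun h => hBGrn (hTG (hCgT ▸ h))
    have hCBne : CB ≠ Cg := fun h => hBCg (h ▸ hBCB)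
    by_cases hS : ∃ S : Finset α, S.Nonempty ∧ S ⊆ Grn ∧ CB = insert B S
    · -- g deviates to B's coalition
      obtain ⟨S, hSne, hSG, hCBS⟩ := hS
      have hgCB : g ∉ CB := fun h => hBCg ((huniq g CB Cg hCB hCg h hgCg) ▸ hBCB)
      have hgS : g ∉ S := fun h => hgCB (hCBS ▸ Finset.mem_insert_of_mem h)
      have hins : insert g CB = insert B (insert g S) := by
        rw [hCBS, Finset.insert_comm]
      refine ⟨g, Cg, hCg, hgCg, CB, Or.inl hCB, hCBne, ?_, ?_⟩
      · rw [hins, hCgT]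
        exact htrap.G_B_over_G g hg (insert g S) T (Finset.mem_insert_self g S)
          (Finset.insert_subset_iff.mpr ⟨hg, hSG⟩) hgT hTG
          (hMG_B _ (Finset.mem_insert_self B _)) (hCgT ▸ hCgMG)
      · intro j hj
        rw [hins, hCBS]
        rw [hCBS, Finset.mem_insert] at hj
        rcases hj with rfl | hj
        · exact (htrap.B_green_mono (insert g S) S (Finset.insert_nonempty g S)
            (Finset.insert_subset_iff.mpr ⟨hg, hSG⟩) hSne hSG
            (by rw [Finset.card_insert_of_notMem hgS]; omega)).1
        · exact (htrap.G_B_mono j (hSG hj) (insert g S) S (Finset.mem_insert_of_mem hj)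
            (Finset.insert_subset_iff.mpr ⟨hg, hSG⟩) hj hSG
            (hMG_B _ (Finset.mem_insert_self B _)) (hMG_B _ (Finset.mem_insert_self B _))
            (by rw [Finset.card_insert_of_notMem hgS]; omega)).1
    by_cases hRBc : CB = {R, B}
    · -- B deviates to Cg
      refine ⟨B, CB, hCB, hBCB, Cg, Or.inl hCg, Ne.symm hCBne, ?_, ?_⟩
      · rw [hCgT, hRBc]
        exact htrap.B_green_over_RB T ⟨g, hgT⟩ hTG
      · intro j hj
        rw [hCgT] at hj ⊢
        exact (htrap.G_B_over_G j (hTG hj) T T hj hTG hj hTG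
          (hMG_B _ (Finset.mem_insert_self B _)) (hCgT ▸ hCgMG)).1
    by_cases hBc : CB = {B}
    · -- B deviates to Cg
      refine ⟨B, CB, hCB, hBCB, Cg, Or.inl hCg, Ne.symm hCBne, ?_, ?_⟩
      · rw [hCgT, hBc]
        exact sptrans B _ {R, B} {B} (htrap.B_green_over_RB T ⟨g, hgT⟩ hTG)
          htrap.B_RB_over_alone
      · intro j hj
        rw [hCgT] at hj ⊢
        exact (htrap.G_B_over_G j (hTG hj) T T hj hTG hj hTG
          (hMG_B _ (Finset.mem_insert_self B _)) (hCgT ▸ hCgMG)).1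
    · -- B deviates to the empty coalition
      refine ⟨B, CB, hCB, hBCB, ∅, Or.inr rfl, Ne.symm (hne CB hCB).ne_empty, ?_, ?_⟩
      · have := htrap.B_alone_over_rest CB hBCB hRBc hBc hS
        simpa using this
      · intro j hj; exact absurd hj (Finset.notMem_empty j)
  · -- Case B : Cg = insert R T
    have hRCg : R ∈ Cg := by rw [hCgR]; exact Finset.mem_insert_self R T
    have hBCg : B ∉ Cg := by
      rw [hCgR]
      intro h
      rcases Finset.mem_insert.mp h with h | h
      · exact hRB h.symm
      · exact hBGrn (hTG h)
    have hCgRB : Cg ≠ {R, B} := fun h => hBCg (by rw [h]; simp)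
    have hCBCg : CB ≠ Cg := fun h => hBCg (h ▸ hBCB)
    by_cases hS : ∃ S : Finset α, S.Nonempty ∧ S ⊆ Grn ∧ CB = insert B S
    · -- some green from B's coalition deviates to Cg
      obtain ⟨S, hSne, hSG, hCBS⟩ := hS
      obtain ⟨j, hjS⟩ := hSne
      have hjG : j ∈ Grn := hSG hjS
      have hjCB : j ∈ CB := by rw [hCBS]; exact Finset.mem_insert_of_mem hjS
      have hjCg : j ∉ Cg := fun h => hCBCg (huniq j CB Cg hCB hCg hjCB h)
      have hjT : j ∉ T := fun h => hjCg (by rw [hCgR]; exact Finset.mem_insert_of_mem h)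
      refine ⟨j, CB, hCB, hjCB, Cg, Or.inl hCg, Ne.symm hCBCg, ?_, ?_⟩
      · rw [hCgR, hCBS, Finset.insert_comm]
        exact htrap.G_R_over_B j hjG (insert j T) S (Finset.mem_insert_self j T)
          (Finset.insert_subset_iff.mpr ⟨hjG, hTG⟩) hjS hSG
          (hMG_R _ (Finset.mem_insert_self R _)) (hMG_B _ (Finset.mem_insert_self B _))
      · intro k hk
        rw [hCgR, Finset.insert_comm]
        rw [hCgR, Finset.mem_insert] at hk
        rcases hk with rfl | hk
        · exact (htrap.R_green_mono (insert j T) T ⟨j, Finset.mem_insert_self j T⟩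
            (Finset.insert_subset_iff.mpr ⟨hjG, hTG⟩) ⟨g, hgT⟩ hTG
            (by rw [Finset.card_insert_of_notMem hjT]; omega)).1
        · exact (htrap.G_R_mono k (hTG hk) (insert j T) T (Finset.mem_insert_of_mem hk)
            (Finset.insert_subset_iff.mpr ⟨hjG, hTG⟩) hk hTG
            (hMG_R _ (Finset.mem_insert_self R _)) (hMG_R _ (Finset.mem_insert_self R _))
            (by rw [Finset.card_insert_of_notMem hjT]; omega)).1
    by_cases hRBc : CB = {R, B}
    · -- impossible : R would be in two coalitions
      have hRCB : R ∈ CB := by rw [hRBc]; simp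
      have : CB = Cg := huniq R CB Cg hCB hCg hRCB hRCg
      exact absurd (this ▸ hBCB) hBCg
    by_cases hBc : CB = {B}
    · -- R deviates to B's coalition, forming {R,B}
      refine ⟨R, Cg, hCg, hRCg, CB, Or.inl hCB, hCBCg, ?_, ?_⟩
      · rw [hBc]
        exact htrap.R_top Cg hRCg hCgRB
      · intro j hj
        rw [hBc] at hj ⊢
        rw [Finset.mem_singleton] at hj
        subst hj
        exact htrap.B_RB_over_alone.1
    · -- B deviates to the empty coalition
      refine ⟨B, CB, hCB, hBCB, ∅, Or.inr rfl, Ne.symm (hne CB hCB).ne_empty, ?_, ?_⟩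
      · have := htrap.B_alone_over_rest CB hBCB hRBc hBc hS
        simpa using this
      · intro j hj; exact absurd hj (Finset.notMem_empty j)
  · -- Case C : Cg = insert B T
    have hBCg : B ∈ Cg := by rw [hCgB]; exact Finset.mem_insert_self B T
    have hRCg : R ∉ Cg := by
      rw [hCgB]
      intro h
      rcases Finset.mem_insert.mp h with h | h
      · exact hRB h
      · exact hRGrn (hTG h)
    have hCRCg : CR ≠ Cg := fun h => hRCg (h ▸ hRCR)
    by_cases hRBc : CR = {R, B}
    · -- impossible : B would be in two coalitions
      have hBCR : B ∈ CR := by rw [hRBc]; simp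
      have : CR = Cg := huniq B CR Cg hCR hCg hBCR hBCg
      exact absurd (this ▸ hRCR) hRCg
    by_cases hRc : CR = {R}
    · -- g deviates to R's coalition
      refine ⟨g, Cg, hCg, hgCg, CR, Or.inl hCR, hCRCg, ?_, ?_⟩
      · rw [hRc, hCgB]
        rw [Finset.pair_comm g R]
        exact htrap.G_R_over_B g hg {g} T (Finset.mem_singleton_self g)
          (Finset.singleton_subset_iff.mpr hg) hgT hTG
          (hMG_R _ (Finset.mem_insert_self R _)) (hMG_B _ (Finset.mem_insert_self B _))
      · intro j hj
        rw [hRc] at hj ⊢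
        rw [Finset.mem_singleton] at hj
        subst hj
        rw [Finset.pair_comm]
        exact (htrap.R_green_over_alone {g} ⟨g, Finset.mem_singleton_self g⟩
          (Finset.singleton_subset_iff.mpr hg)).1
    by_cases hS : ∃ S : Finset α, S.Nonempty ∧ S ⊆ Grn ∧ CR = insert R S
    · -- g deviates to R's coalition
      obtain ⟨S, hSne, hSG, hCRS⟩ := hS
      have hgCR : g ∉ CR := fun h => hCRCg (huniq g CR Cg hCR hCg h hgCg)
      have hgS : g ∉ S := fun h => hgCR (hCRS ▸ Finset.mem_insert_of_mem h)
      have hins : insert g CR = insert R (insert g S) := by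
        rw [hCRS, Finset.insert_comm]
      refine ⟨g, Cg, hCg, hgCg, CR, Or.inl hCR, hCRCg, ?_, ?_⟩
      · rw [hins, hCgB]
        exact htrap.G_R_over_B g hg (insert g S) T (Finset.mem_insert_self g S)
          (Finset.insert_subset_iff.mpr ⟨hg, hSG⟩) hgT hTG
          (hMG_R _ (Finset.mem_insert_self R _)) (hMG_B _ (Finset.mem_insert_self B _))
      · intro j hj
        rw [hins, hCRS]
        rw [hCRS, Finset.mem_insert] at hj
        rcases hj with rfl | hj
        · exact (htrap.R_green_mono (insert g S) S (Finset.insert_nonempty g S)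
            (Finset.insert_subset_iff.mpr ⟨hg, hSG⟩) hSne hSG
            (by rw [Finset.card_insert_of_notMem hgS]; omega)).1
        · exact (htrap.G_R_mono j (hSG hj) (insert g S) S (Finset.mem_insert_of_mem hj)
            (Finset.insert_subset_iff.mpr ⟨hg, hSG⟩) hj hSG
            (hMG_R _ (Finset.mem_insert_self R _)) (hMG_R _ (Finset.mem_insert_self R _))
            (by rw [Finset.card_insert_of_notMem hgS]; omega)).1
    · -- R deviates to the empty coalition
      refine ⟨R, CR, hCR, hRCR, ∅, Or.inr rfl, Ne.symm (hne CR hCR).ne_empty, ?_, ?_⟩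
      · have := htrap.R_alone_over_rest CR hRCR hRBc hRc hS
        simpa using this
      · intro j hj; exact absurd hj (Finset.notMem_empty j)
end

section
/- Let m ≥ 1, U = {1, …, 3m}, and let 𝒳 be a family of 3-element subsets of U. Construct the hedonic game with agents N = {a_u : u ∈ U} ∪ {R, B} ∪ Grn, where Grn is a set of m green agents and all parts are pairwise disjoint. Let M_G = { {a_u : u ∈ X} ∪ {g} : X ∈ 𝒳, g ∈ Grn }. Preferences: each agent a_u is indifferent among all coalitions of M_G containing a_u, strictly prefers each of them to {a_u}, and strictly prefers {a_u} to every other coalition containing a_u; the agents R, B and the green agents have the trap-gadget preferences with respect to M_G, with each green agent indifferent among the coalitions of M_G containing it. Then the following are equivalent: (1) the game admits a Nash stable outcome; (2) the game admits an individually stable outcome; (3) there exists S ⊆ 𝒳 such that every element of U occurs in exactly one member of S (an exact cover by 3-sets). -/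
/-- Agents of the X3C game: universe agents, `m` green agents, and the two agents R, B. -/
abbrev X3CAgent (m : ℕ) := Fin (3 * m) ⊕ (Fin m ⊕ Fin 2)

/-- The universe agent for `u`. -/
abbrev x3cA {m : ℕ} (u : Fin (3 * m)) : X3CAgent m := Sum.inl u
/-- The green agents. -/
abbrev x3cGrn {m : ℕ} (g : Fin m) : X3CAgent m := Sum.inr (Sum.inl g)
/-- The agent R. -/
abbrev x3cR (m : ℕ) : X3CAgent m := Sum.inr (Sum.inr 0)
/-- The agent B. -/
abbrev x3cB (m : ℕ) : X3CAgent m := Sum.inr (Sum.inr 1)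

/-- The desirable coalitions: one green agent together with the universe agents of a
triple of the family 𝒳. -/
def x3cMG {m : ℕ} (𝒳 : Finset (Finset (Fin (3 * m)))) : Set (Finset (X3CAgent m)) :=
  {C | ∃ X ∈ 𝒳, ∃ g : Fin m, C = insert (x3cGrn g) (X.image Sum.inl)}



section Prelim

lemma sprefTrans {α : Type*} {pref : α → Finset α → Finset α → Prop}
    (htrans : ∀ (a : α) (X Y Z : Finset α), pref a X Y → pref a Y Z → pref a X Z)
    {i : α} {X Y Z : Finset α} (h1 : SPref pref i X Y) (h2 : SPref pref i Y Z) :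
    SPref pref i X Z :=
  ⟨htrans i X Y Z h1.1 h2.1, fun h => h2.2 (htrans i Z X Y h h1.1)⟩

lemma notSPref_of {α : Type*} {pref : α → Finset α → Finset α → Prop} {i : α}
    {X Y : Finset α} (h : SPref pref i Y X) : ¬ SPref pref i X Y :=
  fun h' => h.2 h'.1

variable {m : ℕ}

lemma grn_ne_R (g : Fin m) : x3cGrn g ≠ x3cR m := by simp [x3cGrn, x3cR]
lemma grn_ne_B (g : Fin m) : x3cGrn g ≠ x3cB m := by simp [x3cGrn, x3cB]
lemma R_ne_B : x3cR m ≠ x3cB m := by simp [x3cR, x3cB]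
lemma inl_ne_R (u : Fin (3*m)) : (Sum.inl u : X3CAgent m) ≠ x3cR m := by simp [x3cR]
lemma inl_ne_B (u : Fin (3*m)) : (Sum.inl u : X3CAgent m) ≠ x3cB m := by simp [x3cB]
lemma inl_ne_grn (u : Fin (3*m)) (g : Fin m) : (Sum.inl u : X3CAgent m) ≠ x3cGrn g := by
  simp [x3cGrn]

lemma mem_grnset {a : X3CAgent m} :
    a ∈ (Finset.univ.image (fun g : Fin m => x3cGrn g)) ↔ ∃ g, a = x3cGrn g := by
  simp [eq_comm]

lemma R_notMem_mg {𝒳 : Finset (Finset (Fin (3*m)))} {C} (hC : C ∈ x3cMG 𝒳) :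
    x3cR m ∉ C := by
  obtain ⟨X, -, g, rfl⟩ := hC
  simp [x3cR, x3cGrn]

lemma B_notMem_mg {𝒳 : Finset (Finset (Fin (3*m)))} {C} (hC : C ∈ x3cMG 𝒳) :
    x3cB m ∉ C := by
  obtain ⟨X, -, g, rfl⟩ := hC
  simp [x3cB, x3cGrn]

lemma mg_card {𝒳 : Finset (Finset (Fin (3*m)))} (h𝒳 : ∀ X ∈ 𝒳, X.card = 3)
    {C} (hC : C ∈ x3cMG 𝒳) : C.card = 4 := by
  obtain ⟨X, hX, g, rfl⟩ := hC
  rw [Finset.card_insert_of_notMem (by simp [x3cGrn]),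
    Finset.card_image_of_injective _ Sum.inl_injective, h𝒳 X hX]

lemma grn_mem_mg {𝒳 : Finset (Finset (Fin (3*m)))} {C} (hC : C ∈ x3cMG 𝒳)
    {g : Fin m} (hg : x3cGrn g ∈ C) :
    ∃ X ∈ 𝒳, C = insert (x3cGrn g) (X.image Sum.inl) := by
  obtain ⟨X, hX, g', rfl⟩ := hC
  have hgg : g = g' := by simpa [x3cGrn] using hg
  exact ⟨X, hX, by rw [hgg]⟩

lemma mg_has_inl {𝒳 : Finset (Finset (Fin (3*m)))} (h𝒳 : ∀ X ∈ 𝒳, X.card = 3)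
    {C} (hC : C ∈ x3cMG 𝒳) : ∃ u, Sum.inl u ∈ C := by
  obtain ⟨X, hX, g, rfl⟩ := hC
  obtain ⟨u, hu⟩ := Finset.card_pos.mp (by rw [h𝒳 X hX]; norm_num)
  exact ⟨u, Finset.mem_insert_of_mem (Finset.mem_image_of_mem _ hu)⟩

end Prelim

lemma ind_to_cover {m : ℕ} {𝒳 : Finset (Finset (Fin (3 * m)))}
    (h𝒳 : ∀ X ∈ 𝒳, X.card = 3)
    {pref : X3CAgent m → Finset (X3CAgent m) → Finset (X3CAgent m) → Prop}
    (htrap : TrapGadget pref (x3cR m) (x3cB m)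
      (Finset.univ.image (fun g : Fin m => x3cGrn g)) (x3cMG 𝒳))
    {Part : Finset (Finset (X3CAgent m))} (hOut : IsOutcome Part)
    (hIS : IndStable pref Part) :
    ∃ S : Finset (Finset (Fin (3 * m))), S ⊆ 𝒳 ∧
      ∀ u : Fin (3 * m), ∃! X, X ∈ S ∧ u ∈ X := by
  classical
  obtain ⟨hne, hdisj, hcov⟩ := hOut
  set GrnS : Finset (X3CAgent m) := Finset.univ.image (fun g : Fin m => x3cGrn g) with hGrnS
  have huniq : ∀ {C D : Finset (X3CAgent m)} {i : X3CAgent m},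
      C ∈ Part → D ∈ Part → i ∈ C → i ∈ D → C = D := by
    intro C D i hC hD hiC hiD
    by_contra h
    exact (Finset.disjoint_left.mp (hdisj C hC D hD h) hiC) hiD
  obtain ⟨CR, hCR, hRmem⟩ := hcov (x3cR m)
  obtain ⟨CB, hCB, hBmem⟩ := hcov (x3cB m)
  -- possible forms of CR
  have hRform : CR = {x3cR m, x3cB m} ∨ CR = {x3cR m} ∨
      ∃ S : Finset (X3CAgent m), S.Nonempty ∧ S ⊆ GrnS ∧ CR = insert (x3cR m) S := by
    by_contra h
    push_neg at h
    obtain ⟨h1, h2, h3⟩ := h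
    have hs := htrap.R_alone_over_rest CR hRmem h1 h2 (by
      rintro ⟨S, hS1, hS2, hS3⟩; exact (h3 S hS1 hS2) hS3)
    exact hIS (x3cR m) CR hCR hRmem ∅ (Or.inr rfl)
      (fun he => (hne CR hCR).ne_empty he.symm) ⟨by simpa using hs, by simp⟩
  have hBform : CB = {x3cR m, x3cB m} ∨ CB = {x3cB m} ∨
      ∃ S : Finset (X3CAgent m), S.Nonempty ∧ S ⊆ GrnS ∧ CB = insert (x3cB m) S := by
    by_contra h
    push_neg at h
    obtain ⟨h1, h2, h3⟩ := h
    have hs := htrap.B_alone_over_rest CB hBmem h1 h2 (by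
      rintro ⟨S, hS1, hS2, hS3⟩; exact (h3 S hS1 hS2) hS3)
    exact hIS (x3cB m) CB hCB hBmem ∅ (Or.inr rfl)
      (fun he => (hne CB hCB).ne_empty he.symm) ⟨by simpa using hs, by simp⟩
  -- CR must be {R,B}
  have hCRRB : CR = {x3cR m, x3cB m} := by
    by_contra hne1
    have hCBne : CB ≠ ({x3cR m, x3cB m} : Finset (X3CAgent m)) := by
      intro h
      apply hne1
      have hRCB : x3cR m ∈ CB := by rw [h]; exact Finset.mem_insert_self _ _
      rw [huniq hCR hCB hRmem hRCB]; exact h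
    rcases hRform with h | hR1 | ⟨S, hSne, hSsub, hCReq⟩
    · exact hne1 h
    · -- CR = {R}
      rcases hBform with h | hB1 | ⟨S', hS'ne, hS'sub, hCBeq⟩
      · exact hCBne h
      · -- CB = {B} : B deviates to {R}
        have hRB : CR ≠ CB := by
          rw [hR1, hB1]; intro h
          exact (R_ne_B (m := m)) (Finset.singleton_injective h)
        refine hIS (x3cB m) CB hCB hBmem CR (Or.inl hCR) hRB ⟨?_, ?_⟩
        · rw [hR1, hB1]
          have : insert (x3cB m) {x3cR m} = ({x3cR m, x3cB m} : Finset (X3CAgent m)) := by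
            rw [Finset.pair_comm]
          rw [this]; exact htrap.B_RB_over_alone
        · intro j hj
          rw [hR1] at hj ⊢
          rw [Finset.mem_singleton] at hj
          subst hj
          have hpair : insert (x3cB m) {x3cR m} = ({x3cR m, x3cB m} : Finset (X3CAgent m)) := by
            rw [Finset.pair_comm]
          rw [hpair]
          have hne2 : ({x3cR m} : Finset (X3CAgent m)) ≠ {x3cR m, x3cB m} := by
            intro h
            have : x3cB m ∈ ({x3cR m} : Finset (X3CAgent m)) := by
              rw [h]; exact Finset.mem_insert_of_mem (Finset.mem_singleton_self _)
            rw [Finset.mem_singleton] at this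
            exact (R_ne_B (m := m)) this.symm
          exact (htrap.R_top {x3cR m} (Finset.mem_singleton_self _) hne2).1
      · -- CB = insert B S' : a green of S' deviates to {R}
        obtain ⟨a, ha⟩ := hS'ne
        obtain ⟨g, rfl⟩ := mem_grnset.mp (hS'sub ha)
        have hRnotCB : x3cR m ∉ CB := by
          rw [hCBeq]
          intro h
          rcases Finset.mem_insert.mp h with h | h
          · exact (R_ne_B (m := m)) h
          · obtain ⟨g', hg'⟩ := mem_grnset.mp (hS'sub h)
            exact (grn_ne_R g') hg'.symm
        have hRB : CR ≠ CB := fun h => hRnotCB (h ▸ hRmem)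
        have hgGrn : x3cGrn g ∈ GrnS := mem_grnset.mpr ⟨g, rfl⟩
        have hgCB : x3cGrn g ∈ CB := by rw [hCBeq]; exact Finset.mem_insert_of_mem ha
        refine hIS (x3cGrn g) CB hCB hgCB CR (Or.inl hCR) hRB ⟨?_, ?_⟩
        · rw [hR1, hCBeq]
          have hpair : insert (x3cGrn g) {x3cR m} = (insert (x3cR m) {x3cGrn g} : Finset (X3CAgent m)) := by
            rw [Finset.pair_comm]
          rw [hpair]
          exact htrap.G_R_over_B (x3cGrn g) hgGrn {x3cGrn g} S'
            (Finset.mem_singleton_self _) (Finset.singleton_subset_iff.mpr hgGrn)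
            ha hS'sub
            (fun h => R_notMem_mg h (Finset.mem_insert_self _ _))
            (fun h => B_notMem_mg h (Finset.mem_insert_self _ _))
        · intro j hj
          rw [hR1] at hj ⊢
          rw [Finset.mem_singleton] at hj
          subst hj
          have hpair : insert (x3cGrn g) {x3cR m} = (insert (x3cR m) {x3cGrn g} : Finset (X3CAgent m)) := by
            rw [Finset.pair_comm]
          rw [hpair]
          exact (htrap.R_green_over_alone {x3cGrn g} (Finset.singleton_nonempty _)
            (Finset.singleton_subset_iff.mpr hgGrn)).1
    · -- CR = insert R S
      have hBnotCR : x3cB m ∉ CR := by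
        rw [hCReq]
        intro h
        rcases Finset.mem_insert.mp h with h | h
        · exact (R_ne_B (m := m)) h.symm
        · obtain ⟨g', hg'⟩ := mem_grnset.mp (hSsub h)
          exact (grn_ne_B g') hg'.symm
      have hCBCR : CB ≠ CR := fun h => hBnotCR (h ▸ hBmem)
      rcases hBform with h | hB1 | ⟨S', hS'ne, hS'sub, hCBeq⟩
      · exact hCBne h
      · -- CB = {B} : R deviates to {B}, forming {R,B}
        refine hIS (x3cR m) CR hCR hRmem CB (Or.inl hCB) hCBCR ⟨?_, ?_⟩
        · rw [hB1]
          exact htrap.R_top CR hRmem hne1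
        · intro j hj
          rw [hB1] at hj ⊢
          rw [Finset.mem_singleton] at hj
          subst hj
          exact htrap.B_RB_over_alone.1
      · -- CB = insert B S' : a green of S' deviates to CR
        obtain ⟨a, ha⟩ := hS'ne
        obtain ⟨g, rfl⟩ := mem_grnset.mp (hS'sub ha)
        have hRnotCB : x3cR m ∉ CB := by
          rw [hCBeq]
          intro h
          rcases Finset.mem_insert.mp h with h | h
          · exact (R_ne_B (m := m)) h
          · obtain ⟨g', hg'⟩ := mem_grnset.mp (hS'sub h)
            exact (grn_ne_R g') hg'.symm
        have hCRCB : CR ≠ CB := fun h => hRnotCB (h ▸ hRmem)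
        have hgGrn : x3cGrn g ∈ GrnS := mem_grnset.mpr ⟨g, rfl⟩
        have hgCB : x3cGrn g ∈ CB := by rw [hCBeq]; exact Finset.mem_insert_of_mem ha
        have hgnotCR : x3cGrn g ∉ CR := by
          intro h
          exact hCRCB (huniq hCR hCB h hgCB)
        have hgnotS : x3cGrn g ∉ S := fun h => hgnotCR (by rw [hCReq]; exact Finset.mem_insert_of_mem h)
        have hcomm : insert (x3cGrn g) (insert (x3cR m) S) =
            insert (x3cR m) (insert (x3cGrn g) S) := Finset.insert_comm _ _ _
        have hsubins : insert (x3cGrn g) S ⊆ GrnS := Finset.insert_subset hgGrn hSsub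
        have hcard : S.card < (insert (x3cGrn g) S).card := by
          rw [Finset.card_insert_of_notMem hgnotS]; omega
        refine hIS (x3cGrn g) CB hCB hgCB CR (Or.inl hCR) hCRCB ⟨?_, ?_⟩
        · rw [hCReq, hCBeq, hcomm]
          exact htrap.G_R_over_B (x3cGrn g) hgGrn (insert (x3cGrn g) S) S'
            (Finset.mem_insert_self _ _) hsubins ha hS'sub
            (fun h => R_notMem_mg h (Finset.mem_insert_self _ _))
            (fun h => B_notMem_mg h (Finset.mem_insert_self _ _))
        · intro j hj
          rw [hCReq] at hj ⊢
          rw [hcomm]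
          rcases Finset.mem_insert.mp hj with rfl | hj
          · exact (htrap.R_green_mono (insert (x3cGrn g) S) S
              ⟨_, Finset.mem_insert_self _ _⟩ hsubins hSne hSsub hcard).1
          · obtain ⟨j0, rfl⟩ := mem_grnset.mp (hSsub hj)
            exact (htrap.G_R_mono (x3cGrn j0) (hSsub hj) (insert (x3cGrn g) S) S
              (Finset.mem_insert_of_mem hj) hsubins hj hSsub
              (fun h => R_notMem_mg h (Finset.mem_insert_self _ _))
              (fun h => R_notMem_mg h (Finset.mem_insert_self _ _)) hcard).1
  have hCBRB : CB = {x3cR m, x3cB m} := by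
    have hBRB : x3cB m ∈ CR := by rw [hCRRB]; exact Finset.mem_insert_of_mem (Finset.mem_singleton_self _)
    rw [huniq hCB hCR hBmem hBRB]; exact hCRRB
  -- every green agent sits in an MG coalition
  have hgreen : ∀ g : Fin m, ∃ C ∈ Part, x3cGrn g ∈ C ∧ C ∈ x3cMG 𝒳 := by
    intro g
    obtain ⟨Cg, hCg, hgmem⟩ := hcov (x3cGrn g)
    refine ⟨Cg, hCg, hgmem, ?_⟩
    by_contra hnotMG
    have hgGrn : x3cGrn g ∈ GrnS := mem_grnset.mpr ⟨g, rfl⟩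
    have hgRB : Cg ≠ ({x3cR m, x3cB m} : Finset (X3CAgent m)) := by
      intro h
      rw [h] at hgmem
      rcases Finset.mem_insert.mp hgmem with h' | h'
      · exact (grn_ne_R g) h'
      · exact (grn_ne_B g) (Finset.mem_singleton.mp h')
    have hRnot : x3cR m ∉ Cg := by
      intro h
      exact hgRB ((huniq hCg hCR h hRmem).trans hCRRB)
    have hBnot : x3cB m ∉ Cg := by
      intro h
      exact hgRB ((huniq hCg hCB h hBmem).trans hCBRB)
    have hsub : Cg ⊆ GrnS := by
      by_contra hnsub
      have hform : ¬ ∃ T : Finset (X3CAgent m), x3cGrn g ∈ T ∧ T ⊆ GrnS ∧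
          (Cg = T ∨ Cg = insert (x3cR m) T ∨ Cg = insert (x3cB m) T) := by
        rintro ⟨T, hgT, hTsub, (rfl | rfl | rfl)⟩
        · exact hnsub hTsub
        · exact hRnot (Finset.mem_insert_self _ _)
        · exact hBnot (Finset.mem_insert_self _ _)
      have hsingMG : ({x3cGrn g} : Finset (X3CAgent m)) ∉ x3cMG 𝒳 := by
        intro h
        have := mg_card h𝒳 h
        simp at this
      have hsp := htrap.G_G_over_rest (x3cGrn g) hgGrn {x3cGrn g} Cg
        (Finset.mem_singleton_self _) (Finset.singleton_subset_iff.mpr hgGrn)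
        hsingMG hgmem hnotMG hform
      exact hIS (x3cGrn g) Cg hCg hgmem ∅ (Or.inr rfl)
        (fun he => (hne Cg hCg).ne_empty he.symm) ⟨by simpa using hsp, by simp⟩
    -- B deviates to Cg
    have hCgne : Cg ≠ CB := fun h => hBnot (h ▸ hBmem)
    refine hIS (x3cB m) CB hCB hBmem Cg (Or.inl hCg) hCgne ⟨?_, ?_⟩
    · rw [hCBRB]
      exact htrap.B_green_over_RB Cg ⟨_, hgmem⟩ hsub
    · intro j hj
      obtain ⟨j0, rfl⟩ := mem_grnset.mp (hsub hj)
      exact (htrap.G_B_over_G (x3cGrn j0) (hsub hj) Cg Cg hj hsub hj hsub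
        (fun h => B_notMem_mg h (Finset.mem_insert_self _ _)) hnotMG).1
  -- choose the triple of each green agent
  have hchoice : ∀ g : Fin m, ∃ X, X ∈ 𝒳 ∧ insert (x3cGrn g) (X.image Sum.inl) ∈ Part := by
    intro g
    obtain ⟨C, hC, hgC, hMG⟩ := hgreen g
    obtain ⟨X, hX, hCeq⟩ := grn_mem_mg hMG hgC
    exact ⟨X, hX, hCeq ▸ hC⟩
  choose f hf𝒳 hfPart using hchoice
  have hco : ∀ g g' : Fin m,
      insert (x3cGrn g) ((f g).image (Sum.inl : Fin (3*m) → X3CAgent m)) =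
        insert (x3cGrn g') ((f g').image Sum.inl) →
      g = g' := by
    intro g g' h
    have : x3cGrn g ∈ insert (x3cGrn g') ((f g').image (Sum.inl : Fin (3*m) → X3CAgent m)) := by
      rw [← h]; exact Finset.mem_insert_self _ _
    rcases Finset.mem_insert.mp this with h' | h'
    · simpa [x3cGrn] using h'
    · obtain ⟨u, -, hu⟩ := Finset.mem_image.mp h'
      exact absurd hu (inl_ne_grn u g)
  have hsame : ∀ {g g' : Fin m} {u : Fin (3 * m)}, u ∈ f g → u ∈ f g' → g = g' := by
    intro g g' u hu hu'
    have h1 : (Sum.inl u : X3CAgent m) ∈ insert (x3cGrn g) ((f g).image Sum.inl) :=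
      Finset.mem_insert_of_mem (Finset.mem_image_of_mem _ hu)
    have h2 : (Sum.inl u : X3CAgent m) ∈ insert (x3cGrn g') ((f g').image Sum.inl) :=
      Finset.mem_insert_of_mem (Finset.mem_image_of_mem _ hu')
    exact hco g g' (huniq (hfPart g) (hfPart g') h1 h2)
  have hdisjf : ∀ g ∈ (Finset.univ : Finset (Fin m)), ∀ g' ∈ (Finset.univ : Finset (Fin m)),
      g ≠ g' → Disjoint (f g) (f g') := by
    intro g _ g' _ hgg'
    rw [Finset.disjoint_left]
    intro u hu hu'
    exact hgg' (hsame hu hu')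
  have hsum : ((Finset.univ : Finset (Fin m)).biUnion f).card = 3 * m := by
    rw [Finset.card_biUnion hdisjf,
      Finset.sum_congr rfl (fun g _ => h𝒳 _ (hf𝒳 g))]
    simp [mul_comm]
  have hbu : (Finset.univ : Finset (Fin m)).biUnion f = Finset.univ :=
    Finset.eq_univ_of_card _ (by rw [hsum]; simp)
  have hexists : ∀ u : Fin (3 * m), ∃ g, u ∈ f g := by
    intro u
    have : u ∈ (Finset.univ : Finset (Fin m)).biUnion f := by rw [hbu]; exact Finset.mem_univ u
    simpa using this
  refine ⟨Finset.univ.image f, ?_, ?_⟩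
  · intro X hX
    obtain ⟨g, -, rfl⟩ := Finset.mem_image.mp hX
    exact hf𝒳 g
  · intro u
    obtain ⟨g, hg⟩ := hexists u
    refine ⟨f g, ⟨Finset.mem_image_of_mem f (Finset.mem_univ g), hg⟩, ?_⟩
    rintro Y ⟨hYS, hYu⟩
    obtain ⟨g', -, rfl⟩ := Finset.mem_image.mp hYS
    rw [hsame hYu hg]

def x3cCoal {m : ℕ} {S : Finset (Finset (Fin (3 * m)))} (e : {X // X ∈ S} ≃ Fin m)
    (X : {X // X ∈ S}) : Finset (X3CAgent m) :=
  insert (x3cGrn (e X)) (X.1.image (Sum.inl : Fin (3 * m) → X3CAgent m))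

lemma grn_mem_coal {m : ℕ} {S : Finset (Finset (Fin (3 * m)))} {e : {X // X ∈ S} ≃ Fin m}
    {g : Fin m} {X : {X // X ∈ S}} : x3cGrn g ∈ x3cCoal e X ↔ g = e X := by
  simp [x3cCoal, x3cGrn]

lemma inl_mem_coal {m : ℕ} {S : Finset (Finset (Fin (3 * m)))} {e : {X // X ∈ S} ≃ Fin m}
    {u : Fin (3 * m)} {X : {X // X ∈ S}} :
    (Sum.inl u : X3CAgent m) ∈ x3cCoal e X ↔ u ∈ X.1 := by
  simp [x3cCoal, x3cGrn]

lemma R_notMem_coal {m : ℕ} {S : Finset (Finset (Fin (3 * m)))} {e : {X // X ∈ S} ≃ Fin m}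
    {X : {X // X ∈ S}} : x3cR m ∉ x3cCoal e X := by
  simp [x3cCoal, x3cR, x3cGrn]

lemma B_notMem_coal {m : ℕ} {S : Finset (Finset (Fin (3 * m)))} {e : {X // X ∈ S} ≃ Fin m}
    {X : {X // X ∈ S}} : x3cB m ∉ x3cCoal e X := by
  simp [x3cCoal, x3cB, x3cGrn]

lemma cover_to_nash {m : ℕ} {𝒳 : Finset (Finset (Fin (3 * m)))}
    (h𝒳 : ∀ X ∈ 𝒳, X.card = 3)
    {pref : X3CAgent m → Finset (X3CAgent m) → Finset (X3CAgent m) → Prop}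
    (htrans : ∀ (a : X3CAgent m) (X Y Z : Finset (X3CAgent m)),
      pref a X Y → pref a Y Z → pref a X Z)
    (hU_over_alone : ∀ (u : Fin (3 * m)) (C : Finset (X3CAgent m)),
      C ∈ x3cMG 𝒳 → x3cA u ∈ C → SPref pref (x3cA u) C {x3cA u})
    (hU_alone_over_rest : ∀ (u : Fin (3 * m)) (C : Finset (X3CAgent m)),
      x3cA u ∈ C → C ∉ x3cMG 𝒳 → C ≠ {x3cA u} → SPref pref (x3cA u) {x3cA u} C)
    (htrap : TrapGadget pref (x3cR m) (x3cB m)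
      (Finset.univ.image (fun g : Fin m => x3cGrn g)) (x3cMG 𝒳))
    {S : Finset (Finset (Fin (3 * m)))} (hS𝒳 : S ⊆ 𝒳)
    (hScov : ∀ u : Fin (3 * m), ∃! X, X ∈ S ∧ u ∈ X) :
    ∃ Part : Finset (Finset (X3CAgent m)), IsOutcome Part ∧ NashStable pref Part := by
  classical
  have hScov' : ∀ {X Y : Finset (Fin (3 * m))} {u}, X ∈ S → Y ∈ S → u ∈ X → u ∈ Y →
      X = Y := by
    intro X Y u hX hY huX huY
    obtain ⟨Z, -, hZ⟩ := hScov u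
    exact (hZ X ⟨hX, huX⟩).trans (hZ Y ⟨hY, huY⟩).symm
  have hdisjS : ∀ X ∈ S, ∀ Y ∈ S, X ≠ Y → Disjoint X Y := by
    intro X hX Y hY hXY
    rw [Finset.disjoint_left]
    intro u huX huY
    exact hXY (hScov' hX hY huX huY)
  have hbuS : S.biUnion (fun X => X) = Finset.univ := by
    apply Finset.eq_univ_of_forall
    intro u
    obtain ⟨X, ⟨hXS, hXu⟩, -⟩ := hScov u
    exact Finset.mem_biUnion.mpr ⟨X, hXS, hXu⟩
  have hcardS : S.card = m := by
    have h1 : (S.biUnion (fun X => X)).card = 3 * m := by rw [hbuS]; simp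
    rw [Finset.card_biUnion hdisjS] at h1
    rw [Finset.sum_congr rfl (fun X hX => h𝒳 X (hS𝒳 hX)), Finset.sum_const,
      smul_eq_mul] at h1
    omega
  let e : {X // X ∈ S} ≃ Fin m := S.equivFin.trans (finCongr hcardS)
  set Part : Finset (Finset (X3CAgent m)) :=
    insert {x3cR m, x3cB m} (S.attach.image (x3cCoal e)) with hPartdef
  have hmem : ∀ C : Finset (X3CAgent m), C ∈ Part ↔
      C = {x3cR m, x3cB m} ∨ ∃ X, x3cCoal e X = C := by
    intro C
    simp [hPartdef]
  have hcoalMG : ∀ X, x3cCoal e X ∈ x3cMG 𝒳 := fun X => ⟨X.1, hS𝒳 X.2, e X, rfl⟩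
  have hcoal_ne : ∀ X Y, x3cCoal e X = x3cCoal e Y → X = Y := by
    intro X Y h
    have : x3cGrn (e X) ∈ x3cCoal e Y := h ▸ Finset.mem_insert_self _ _
    exact e.injective (grn_mem_coal.mp this)
  have hcoal_disj : ∀ X Y, X ≠ Y → Disjoint (x3cCoal e X) (x3cCoal e Y) := by
    intro X Y hXY
    rw [Finset.disjoint_left]
    intro a haX haY
    rcases Finset.mem_insert.mp haX with rfl | ha
    · exact hXY (e.injective (grn_mem_coal.mp haY))
    · obtain ⟨u, huX, rfl⟩ := Finset.mem_image.mp ha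
      have huY : u ∈ Y.1 := inl_mem_coal.mp haY
      exact hXY (Subtype.ext (hScov' X.2 Y.2 huX huY))
  have hRB_coal_disj : ∀ X, Disjoint ({x3cR m, x3cB m} : Finset (X3CAgent m)) (x3cCoal e X) := by
    intro X
    rw [Finset.disjoint_left]
    intro a ha
    rcases Finset.mem_insert.mp ha with rfl | ha
    · exact R_notMem_coal
    · rw [Finset.mem_singleton] at ha; subst ha; exact B_notMem_coal
  refine ⟨Part, ⟨?_, ?_, ?_⟩, ?_⟩
  · -- nonempty
    intro C hC
    rcases (hmem C).mp hC with rfl | ⟨X, rfl⟩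
    · exact ⟨_, Finset.mem_insert_self _ _⟩
    · exact ⟨_, Finset.mem_insert_self _ _⟩
  · -- pairwise disjoint
    intro C hC D hD hCD
    rcases (hmem C).mp hC with rfl | ⟨X, rfl⟩ <;> rcases (hmem D).mp hD with rfl | ⟨Y, rfl⟩
    · exact absurd rfl hCD
    · exact hRB_coal_disj Y
    · exact (hRB_coal_disj X).symm
    · exact hcoal_disj X Y (fun h => hCD (by rw [h]))
  · -- covering
    intro i
    obtain u | gk := i
    · obtain ⟨X, ⟨hXS, hXu⟩, -⟩ := hScov u
      exact ⟨x3cCoal e ⟨X, hXS⟩, (hmem _).mpr (Or.inr ⟨_, rfl⟩), inl_mem_coal.mpr hXu⟩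
    obtain g | k := gk
    · exact ⟨x3cCoal e (e.symm g), (hmem _).mpr (Or.inr ⟨_, rfl⟩),
        grn_mem_coal.mpr (e.apply_symm_apply g).symm⟩
    · refine ⟨{x3cR m, x3cB m}, Finset.mem_insert_self _ _, ?_⟩
      fin_cases k
      · exact Finset.mem_insert_self _ _
      · exact Finset.mem_insert_of_mem (Finset.mem_singleton_self _)
  · -- Nash stability
    intro i Ci hCi hiCi C hC hne1
    have hCcases : C = ∅ ∨ C = {x3cR m, x3cB m} ∨ ∃ Y, x3cCoal e Y = C := by
      rcases hC with hC | rfl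
      · rcases (hmem C).mp hC with rfl | h
        · exact Or.inr (Or.inl rfl)
        · exact Or.inr (Or.inr h)
      · exact Or.inl rfl
    rcases (hmem Ci).mp hCi with rfl | ⟨X, rfl⟩
    · -- Ci = {R, B} : i = R or i = B
      rcases Finset.mem_insert.mp hiCi with rfl | hiB
      · -- i = R
        have hneq : insert (x3cR m) C ≠ {x3cR m, x3cB m} := by
          rcases hCcases with rfl | rfl | ⟨Y, rfl⟩
          · intro h
            have hB : x3cB m ∈ insert (x3cR m) (∅ : Finset (X3CAgent m)) := by
              rw [h]; exact Finset.mem_insert_of_mem (Finset.mem_singleton_self _)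
            simp [x3cR, x3cB] at hB
          · exact absurd rfl hne1
          · intro h
            have hg : x3cGrn (e Y) ∈ ({x3cR m, x3cB m} : Finset (X3CAgent m)) := by
              rw [← h]
              exact Finset.mem_insert_of_mem (Finset.mem_insert_self _ _)
            rcases Finset.mem_insert.mp hg with h' | h'
            · exact grn_ne_R _ h'
            · exact grn_ne_B _ (Finset.mem_singleton.mp h')
        exact notSPref_of (htrap.R_top _ (Finset.mem_insert_self _ _) hneq)
      · -- i = B
        rw [Finset.mem_singleton] at hiB
        subst hiB
        rcases hCcases with rfl | rfl | ⟨Y, rfl⟩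
        · have h1 : insert (x3cB m) (∅ : Finset (X3CAgent m)) = {x3cB m} := by simp
          rw [h1]
          exact notSPref_of htrap.B_RB_over_alone
        · exact absurd rfl hne1
        · obtain ⟨u0, hu0⟩ := Finset.card_pos.mp
            (by rw [h𝒳 _ (hS𝒳 Y.2)]; norm_num : 0 < (Y : Finset (Fin (3 * m))).card)
          have hu0C : (Sum.inl u0 : X3CAgent m) ∈ x3cCoal e Y := inl_mem_coal.mpr hu0
          have hd1 : insert (x3cB m) (x3cCoal e Y) ≠ {x3cR m, x3cB m} := by
            intro h
            have hmem' : (Sum.inl u0 : X3CAgent m) ∈ ({x3cR m, x3cB m} : Finset (X3CAgent m)) := by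
              rw [← h]; exact Finset.mem_insert_of_mem hu0C
            rcases Finset.mem_insert.mp hmem' with h' | h'
            · exact inl_ne_R u0 h'
            · exact inl_ne_B u0 (Finset.mem_singleton.mp h')
          have hd2 : insert (x3cB m) (x3cCoal e Y) ≠ {x3cB m} := by
            intro h
            have hmem' : (Sum.inl u0 : X3CAgent m) ∈ ({x3cB m} : Finset (X3CAgent m)) := by
              rw [← h]; exact Finset.mem_insert_of_mem hu0C
            exact inl_ne_B u0 (Finset.mem_singleton.mp hmem')
          have hd3 : ¬ ∃ S' : Finset (X3CAgent m), S'.Nonempty ∧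
              S' ⊆ Finset.univ.image (fun g : Fin m => x3cGrn g) ∧
              insert (x3cB m) (x3cCoal e Y) = insert (x3cB m) S' := by
            rintro ⟨S', -, hsub, h⟩
            have hmem' : (Sum.inl u0 : X3CAgent m) ∈ insert (x3cB m) S' := by
              rw [← h]; exact Finset.mem_insert_of_mem hu0C
            rcases Finset.mem_insert.mp hmem' with h' | h'
            · exact inl_ne_B u0 h'
            · obtain ⟨g, hg⟩ := mem_grnset.mp (hsub h')
              exact inl_ne_grn u0 g hg
          exact notSPref_of (sprefTrans htrans htrap.B_RB_over_alone
            (htrap.B_alone_over_rest _ (Finset.mem_insert_self _ _) hd1 hd2 hd3))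
    · -- Ci = coal X
      rcases Finset.mem_insert.mp hiCi with rfl | hiU
      · -- i is the green agent of coal X
        have hnotMG : insert (x3cGrn (e X)) C ∉ x3cMG 𝒳 := by
          rcases hCcases with rfl | rfl | ⟨Y, rfl⟩
          · intro h
            have := mg_card h𝒳 h
            simp at this
          · intro h
            exact R_notMem_mg h (Finset.mem_insert_of_mem (Finset.mem_insert_self _ _))
          · intro h
            have hgnot : x3cGrn (e X) ∉ x3cCoal e Y := by
              intro h'
              have hXY : X = Y := e.injective (grn_mem_coal.mp h')
              exact hne1 (congrArg (x3cCoal e) hXY).symm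
            have hcard := mg_card h𝒳 h
            rw [Finset.card_insert_of_notMem hgnot, mg_card h𝒳 (hcoalMG Y)] at hcard
            omega
        exact notSPref_of (htrap.G_MG_top _ (mem_grnset.mpr ⟨_, rfl⟩) _ (hcoalMG X)
          hiCi _ (Finset.mem_insert_self _ _) hnotMG)
      · -- i is a universe agent of coal X
        obtain ⟨u, huX, rfl⟩ := Finset.mem_image.mp hiU
        have hbest : ∀ C' : Finset (X3CAgent m), (Sum.inl u : X3CAgent m) ∈ C' →
            C' ∉ x3cMG 𝒳 → SPref pref (Sum.inl u) (x3cCoal e X) C' := by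
          intro C' hu' hnot
          by_cases hC' : C' = {Sum.inl u}
          · rw [hC']; exact hU_over_alone u _ (hcoalMG X) hiCi
          · exact sprefTrans htrans (hU_over_alone u _ (hcoalMG X) hiCi)
              (hU_alone_over_rest u C' hu' hnot hC')
        refine notSPref_of (hbest _ (Finset.mem_insert_self _ _) ?_)
        rcases hCcases with rfl | rfl | ⟨Y, rfl⟩
        · intro h
          have := mg_card h𝒳 h
          simp at this
        · intro h
          exact R_notMem_mg h (Finset.mem_insert_of_mem (Finset.mem_insert_self _ _))
        · intro h
          have hunot : (Sum.inl u : X3CAgent m) ∉ x3cCoal e Y := by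
            intro h'
            have hXY : (X : Finset (Fin (3 * m))) = Y := hScov' X.2 Y.2 huX (inl_mem_coal.mp h')
            exact hne1 (congrArg (x3cCoal e) (Subtype.ext hXY)).symm
          have hcard := mg_card h𝒳 h
          rw [Finset.card_insert_of_notMem hunot, mg_card h𝒳 (hcoalMG Y)] at hcard
          omega

/-- The hedonic game built from an instance of Exact Cover by 3-Sets admits
a Nash stable outcome iff it admits an individually stable outcome iff the instance has
an exact cover. -/
theorem x3c_reduction (m : ℕ) (hm : 1 ≤ m)
    (𝒳 : Finset (Finset (Fin (3 * m)))) (h𝒳 : ∀ X ∈ 𝒳, X.card = 3)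
    (pref : X3CAgent m → Finset (X3CAgent m) → Finset (X3CAgent m) → Prop)
    (htot : ∀ (a : X3CAgent m) (X Y : Finset (X3CAgent m)),
      a ∈ X → a ∈ Y → pref a X Y ∨ pref a Y X)
    (htrans : ∀ (a : X3CAgent m) (X Y Z : Finset (X3CAgent m)),
      pref a X Y → pref a Y Z → pref a X Z)
    -- each universe agent is indifferent among the coalitions of MG containing it
    (hU_indiff : ∀ (u : Fin (3 * m)) (C C' : Finset (X3CAgent m)),
      C ∈ x3cMG 𝒳 → C' ∈ x3cMG 𝒳 → x3cA u ∈ C → x3cA u ∈ C' → pref (x3cA u) C C')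
    -- it strictly prefers each of them to being alone
    (hU_over_alone : ∀ (u : Fin (3 * m)) (C : Finset (X3CAgent m)),
      C ∈ x3cMG 𝒳 → x3cA u ∈ C → SPref pref (x3cA u) C {x3cA u})
    -- and strictly prefers being alone to every other coalition containing it
    (hU_alone_over_rest : ∀ (u : Fin (3 * m)) (C : Finset (X3CAgent m)),
      x3cA u ∈ C → C ∉ x3cMG 𝒳 → C ≠ {x3cA u} → SPref pref (x3cA u) {x3cA u} C)
    -- R, B and the green agents have the trap-gadget preferences w.r.t. MG
    (htrap : TrapGadget pref (x3cR m) (x3cB m)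
      (Finset.univ.image (fun g : Fin m => x3cGrn g)) (x3cMG 𝒳))
    -- each green agent is indifferent among the coalitions of MG containing it
    (hG_indiff : ∀ (g : Fin m) (C C' : Finset (X3CAgent m)),
      C ∈ x3cMG 𝒳 → C' ∈ x3cMG 𝒳 → x3cGrn g ∈ C → x3cGrn g ∈ C' →
      pref (x3cGrn g) C C') :
    ((∃ Part : Finset (Finset (X3CAgent m)), IsOutcome Part ∧ NashStable pref Part) ↔
      (∃ Part : Finset (Finset (X3CAgent m)), IsOutcome Part ∧ IndStable pref Part)) ∧
    ((∃ Part : Finset (Finset (X3CAgent m)), IsOutcome Part ∧ IndStable pref Part) ↔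
      (∃ S : Finset (Finset (Fin (3 * m))), S ⊆ 𝒳 ∧
        ∀ u : Fin (3 * m), ∃! X, X ∈ S ∧ u ∈ X)) := by
  
  have hNI : (∃ Part : Finset (Finset (X3CAgent m)), IsOutcome Part ∧ NashStable pref Part) →
      (∃ Part : Finset (Finset (X3CAgent m)), IsOutcome Part ∧ IndStable pref Part) := by
    rintro ⟨P, hO, hN⟩
    exact ⟨P, hO, fun i Ci hCi hi C hC hn h => hN i Ci hCi hi C hC hn h.1⟩
  have hIC : (∃ Part : Finset (Finset (X3CAgent m)), IsOutcome Part ∧ IndStable pref Part) →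
      (∃ S : Finset (Finset (Fin (3 * m))), S ⊆ 𝒳 ∧
        ∀ u : Fin (3 * m), ∃! X, X ∈ S ∧ u ∈ X) := by
    rintro ⟨P, hO, hI⟩
    exact ind_to_cover h𝒳 htrap hO hI
  have hCN : (∃ S : Finset (Finset (Fin (3 * m))), S ⊆ 𝒳 ∧
        ∀ u : Fin (3 * m), ∃! X, X ∈ S ∧ u ∈ X) →
      (∃ Part : Finset (Finset (X3CAgent m)), IsOutcome Part ∧ NashStable pref Part) := by
    rintro ⟨S, hS, hcov⟩
    exact cover_to_nash h𝒳 htrans hU_over_alone hU_alone_over_rest htrap hS hcov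
  exact ⟨⟨hNI, fun h => hCN (hIC h)⟩, ⟨hIC, fun h => hNI (hCN h)⟩⟩
end

section
/- Let v_1, …, v_n be positive integers with v_1 + ⋯ + v_n = 2k for an integer k ≥ 1. Construct the hedonic game with agents N = {a_1, …, a_n} ∪ {G}. Preferences: each a_j is indifferent among all coalitions C containing a_j with ∑_{a_l ∈ C} v_l = k (the sum ranging over the agents a_l in C), strictly prefers each of them to {a_j}, and strictly prefers {a_j} to every other coalition containing a_j; G is indifferent among all coalitions of size exactly 2 consisting of G and one agent a_l, strictly prefers each of them to {G}, and strictly prefers {G} to every other coalition containing G. Then the game admits a Nash stable outcome if and only if there is a partition of {1, …, n} into two sets I_1 and I_2 with ∑_{j ∈ I_1} v_j = ∑_{j ∈ I_2} v_j = k. -/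
/-- The agents of the game: `a_1, …, a_n` together with the guard agent `G = Sum.inr ()`. -/
abbrev PartAgent (n : ℕ) := Fin n ⊕ Unit

/-- The sum of the values of the normal agents in a coalition. -/
def coalValue {n : ℕ} (v : Fin n → ℕ) (C : Finset (PartAgent n)) : ℕ :=
  ∑ l ∈ Finset.univ.filter (fun l : Fin n => Sum.inl l ∈ C), v l

lemma coalValue_image {n : ℕ} (v : Fin n → ℕ) (I : Finset (Fin n)) :
    coalValue v (I.image Sum.inl) = ∑ j ∈ I, v j := by
  unfold coalValue
  congr 1
  ext l
  simp

lemma coalValue_empty {n : ℕ} (v : Fin n → ℕ) : coalValue v (∅ : Finset (PartAgent n)) = 0 := by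
  simp [coalValue]

lemma coalValue_insert_inr {n : ℕ} (v : Fin n → ℕ) (C : Finset (PartAgent n)) :
    coalValue v (insert (Sum.inr ()) C) = coalValue v C := by
  unfold coalValue
  congr 1
  ext l
  simp

lemma coalValue_insert_inl {n : ℕ} (v : Fin n → ℕ) (j : Fin n) (C : Finset (PartAgent n))
    (h : Sum.inl j ∉ C) :
    coalValue v (insert (Sum.inl j) C) = v j + coalValue v C := by
  unfold coalValue
  have heq : Finset.univ.filter (fun l : Fin n => Sum.inl l ∈ insert (Sum.inl j) C)
      = insert j (Finset.univ.filter (fun l : Fin n => Sum.inl l ∈ C)) := by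
    ext l
    simp [Sum.inl.injEq, eq_comm]
  rw [heq, Finset.sum_insert (by simp [h])]

lemma coalValue_pair {n : ℕ} (v : Fin n → ℕ) (l : Fin n) :
    coalValue v ({Sum.inr (), Sum.inl l} : Finset (PartAgent n)) = v l := by
  rw [show ({Sum.inr (), Sum.inl l} : Finset (PartAgent n))
      = insert (Sum.inr ()) {Sum.inl l} from rfl, coalValue_insert_inr,
    show ({Sum.inl l} : Finset (PartAgent n)) = insert (Sum.inl l) ∅ from rfl,
    coalValue_insert_inl v l ∅ (by simp), coalValue_empty, Nat.add_zero]

lemma coalValue_singleton {n : ℕ} (v : Fin n → ℕ) (l : Fin n) :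
    coalValue v ({Sum.inl l} : Finset (PartAgent n)) = v l := by
  rw [show ({Sum.inl l} : Finset (PartAgent n)) = insert (Sum.inl l) ∅ from rfl,
    coalValue_insert_inl v l ∅ (by simp), coalValue_empty, Nat.add_zero]

/-- A normal agent sitting in a value-`k` coalition never strictly prefers a coalition
whose value is not `k` (or being alone). -/
lemma normal_no_dev {n k : ℕ}
    (v : Fin n → ℕ)
    (pref : PartAgent n → Finset (PartAgent n) → Finset (PartAgent n) → Prop)
    (htrans : ∀ (a : PartAgent n) (X Y Z : Finset (PartAgent n)),
      pref a X Y → pref a Y Z → pref a X Z)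
    (hN_over_alone : ∀ (j : Fin n) (C : Finset (PartAgent n)),
      Sum.inl j ∈ C → coalValue v C = k → SPref pref (Sum.inl j) C {Sum.inl j})
    (hN_alone_over_rest : ∀ (j : Fin n) (C : Finset (PartAgent n)),
      Sum.inl j ∈ C → coalValue v C ≠ k → C ≠ {Sum.inl j} →
      SPref pref (Sum.inl j) {Sum.inl j} C)
    (j : Fin n) (Ci X : Finset (PartAgent n))
    (hCi : Sum.inl j ∈ Ci) (hCik : coalValue v Ci = k)
    (hX : Sum.inl j ∈ X)
    (hXk : X ≠ {Sum.inl j} → coalValue v X ≠ k) :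
    ¬ SPref pref (Sum.inl j) X Ci := by
  by_cases hXs : X = {Sum.inl j}
  · subst hXs
    exact fun hs => hs.2 (hN_over_alone j Ci hCi hCik).1
  · have h1 := (hN_over_alone j Ci hCi hCik).1
    have h2 := (hN_alone_over_rest j X hX (hXk hXs) hXs).1
    exact fun hs => hs.2 (htrans _ _ _ _ h1 h2)

set_option maxHeartbeats 1600000

/-- The hedonic game built from positive integers `v_1, …, v_n` summing to
`2k` admits a Nash stable outcome iff the values can be partitioned into two halves each
summing to `k`. -/
theorem partition_reduction_nash (n k : ℕ) (hk : 1 ≤ k)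
    (v : Fin n → ℕ) (hv : ∀ j, 0 < v j) (hsum : ∑ j, v j = 2 * k)
    (pref : PartAgent n → Finset (PartAgent n) → Finset (PartAgent n) → Prop)
    (htot : ∀ (a : PartAgent n) (X Y : Finset (PartAgent n)),
      a ∈ X → a ∈ Y → pref a X Y ∨ pref a Y X)
    (htrans : ∀ (a : PartAgent n) (X Y Z : Finset (PartAgent n)),
      pref a X Y → pref a Y Z → pref a X Z)
    -- each normal agent aⱼ is indifferent among coalitions containing it whose
    -- members' values sum to k
    (hN_indiff : ∀ (j : Fin n) (C C' : Finset (PartAgent n)),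
      Sum.inl j ∈ C → coalValue v C = k → Sum.inl j ∈ C' → coalValue v C' = k →
      pref (Sum.inl j) C C')
    -- it strictly prefers each of them to being alone
    (hN_over_alone : ∀ (j : Fin n) (C : Finset (PartAgent n)),
      Sum.inl j ∈ C → coalValue v C = k → SPref pref (Sum.inl j) C {Sum.inl j})
    -- and strictly prefers being alone to every other coalition containing it
    (hN_alone_over_rest : ∀ (j : Fin n) (C : Finset (PartAgent n)),
      Sum.inl j ∈ C → coalValue v C ≠ k → C ≠ {Sum.inl j} →
      SPref pref (Sum.inl j) {Sum.inl j} C)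
    -- G is indifferent among all coalitions of size 2 consisting of G and one normal agent
    (hG_indiff : ∀ l l' : Fin n,
      pref (Sum.inr ()) {Sum.inr (), Sum.inl l} {Sum.inr (), Sum.inl l'})
    -- G strictly prefers each of them to being alone
    (hG_over_alone : ∀ l : Fin n,
      SPref pref (Sum.inr ()) {Sum.inr (), Sum.inl l} {Sum.inr ()})
    -- and strictly prefers being alone to every other coalition containing G
    (hG_alone_over_rest : ∀ C : Finset (PartAgent n), Sum.inr () ∈ C →
      (¬ ∃ l : Fin n, C = {Sum.inr (), Sum.inl l}) → C ≠ {Sum.inr ()} →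
      SPref pref (Sum.inr ()) {Sum.inr ()} C) :
    (∃ Part : Finset (Finset (PartAgent n)), IsOutcome Part ∧ NashStable pref Part) ↔
      (∃ I : Finset (Fin n), (∑ j ∈ I, v j) = k ∧ (∑ j ∈ Iᶜ, v j) = k) := by
  constructor
  · -- Nash stable outcome → partition
    rintro ⟨Part, ⟨hne, hdisj, hcov⟩, hNS⟩
    obtain ⟨CG, hCG, hGin⟩ := hcov (Sum.inr ())
    by_cases hpair : ∃ l : Fin n, CG = {Sum.inr (), Sum.inl l}
    · -- G is in a pair {G, a_l}; then v l = k
      obtain ⟨l, rfl⟩ := hpair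
      have hmem : (Sum.inl l : PartAgent n) ∈
          ({Sum.inr (), Sum.inl l} : Finset (PartAgent n)) := by simp
      have hvl : v l = k := by
        by_contra hvl
        have hsp := hN_alone_over_rest l _ hmem
          (by rw [coalValue_pair]; exact hvl) (by intro h; simp [Finset.ext_iff] at h)
        have hdev := hNS (Sum.inl l) _ hCG hmem ∅ (Or.inr rfl)
          (by intro h; simp [Finset.ext_iff] at h)
        rw [show insert (Sum.inl l) (∅ : Finset (PartAgent n)) = {Sum.inl l} from rfl] at hdev
        exact hdev hsp
      refine ⟨{l}, by simpa using hvl, ?_⟩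
      have hcompl := Finset.sum_compl_add_sum ({l} : Finset (Fin n)) v
      rw [hsum] at hcompl
      simp only [Finset.sum_singleton] at hcompl
      omega
    · by_cases hsingle : CG = {Sum.inr ()}
      · -- G alone; then all coalitions of normal agents have value k
        subst hsingle
        have key : ∀ j : Fin n, ∀ Cj ∈ Part, Sum.inl j ∈ Cj → coalValue v Cj = k := by
          intro j Cj hCj hjCj
          have hCjne : Cj ≠ ({Sum.inr ()} : Finset (PartAgent n)) := by
            intro h; rw [h] at hjCj; simp at hjCj
          have hCjnonempty : Cj ≠ ∅ := (hne Cj hCj).ne_empty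
          have hnots : Cj ≠ {Sum.inl j} := by
            intro h
            have hdev := hNS (Sum.inr ()) _ hCG (by simp) Cj (Or.inl hCj) hCjne
            rw [h] at hdev
            exact hdev (hG_over_alone j)
          by_contra hvk
          have hsp := hN_alone_over_rest j Cj hjCj hvk hnots
          have hdev := hNS (Sum.inl j) Cj hCj hjCj ∅ (Or.inr rfl) (fun h => hCjnonempty h.symm)
          rw [show insert (Sum.inl j) (∅ : Finset (PartAgent n)) = {Sum.inl j} from rfl] at hdev
          exact hdev hsp
        have hn : 0 < n := by
          rcases Nat.eq_zero_or_pos n with h | h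
          · subst h; simp at hsum; omega
          · exact h
        obtain ⟨C0, hC0, h0in⟩ := hcov (Sum.inl ⟨0, hn⟩)
        have hIk : coalValue v C0 = k := key _ C0 hC0 h0in
        refine ⟨Finset.univ.filter (fun l : Fin n => Sum.inl l ∈ C0), hIk, ?_⟩
        have hcompl := Finset.sum_compl_add_sum
          (Finset.univ.filter (fun l : Fin n => Sum.inl l ∈ C0)) v
        rw [hsum] at hcompl
        unfold coalValue at hIk
        omega
      · -- otherwise G would deviate to being alone
        exfalso
        have hsp := hG_alone_over_rest CG hGin hpair hsingle
        have hdev := hNS (Sum.inr ()) CG hCG hGin ∅ (Or.inr rfl)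
          (fun h => (hne CG hCG).ne_empty h.symm)
        rw [show insert (Sum.inr ()) (∅ : Finset (PartAgent n)) = {Sum.inr ()} from rfl] at hdev
        exact hdev hsp
  · -- partition → Nash stable outcome
    rintro ⟨I, hIk, hIck⟩
    by_cases hex : ∃ j, v j = k
    · -- some v j = k : use {{G, a_j}, rest}
      obtain ⟨j, hvj⟩ := hex
      set P : Finset (PartAgent n) := {Sum.inr (), Sum.inl j} with hP
      set Q : Finset (PartAgent n) := ({j}ᶜ : Finset (Fin n)).image Sum.inl with hQ
      have hPval : coalValue v P = k := by rw [hP, coalValue_pair]; exact hvj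
      have hQval : coalValue v Q = k := by
        rw [hQ, coalValue_image]
        have hcompl := Finset.sum_compl_add_sum ({j} : Finset (Fin n)) v
        rw [hsum] at hcompl
        simp only [Finset.sum_singleton] at hcompl
        omega
      have hGQ : (Sum.inr () : PartAgent n) ∉ Q := by simp [hQ]
      have hQmem : ∀ l : Fin n, Sum.inl l ∈ Q ↔ l ≠ j := by intro l; simp [hQ]
      have hQne : Q.Nonempty := by
        rw [Finset.nonempty_iff_ne_empty]
        intro h
        rw [h, coalValue_empty] at hQval
        omega
      have hjP : (Sum.inl j : PartAgent n) ∈ P := by simp [hP]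
      have hjQ : (Sum.inl j : PartAgent n) ∉ Q := by simp [hQ]
      refine ⟨{P, Q}, ⟨?_, ?_, ?_⟩, ?_⟩
      · intro C hC
        simp only [Finset.mem_insert, Finset.mem_singleton] at hC
        rcases hC with rfl | rfl
        · exact ⟨_, hjP⟩
        · exact hQne
      · intro C hC D hD hCD
        have hdPQ : Disjoint P Q := by
          rw [Finset.disjoint_left]
          intro x hxP hxQ
          rw [hP] at hxP
          simp only [Finset.mem_insert, Finset.mem_singleton] at hxP
          rcases hxP with rfl | rfl
          · exact hGQ hxQ
          · exact hjQ hxQ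
        simp only [Finset.mem_insert, Finset.mem_singleton] at hC hD
        rcases hC with rfl | rfl <;> rcases hD with rfl | rfl
        · exact absurd rfl hCD
        · exact hdPQ
        · exact hdPQ.symm
        · exact absurd rfl hCD
      · intro i
        rcases i with m | u
        · by_cases hm : m = j
          · exact ⟨P, by simp, by simp [hm, hP]⟩
          · exact ⟨Q, by simp, (hQmem m).2 hm⟩
        · exact ⟨P, by simp, by simp [hP]⟩
      · -- Nash stability
        intro i Ci hCi hiCi C hC hCne
        have hCi' : Ci = P ∨ Ci = Q := by
          simpa using hCi
        have hC' : C = P ∨ C = Q ∨ C = ∅ := by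
          rcases hC with h | h
          · simp only [Finset.mem_insert, Finset.mem_singleton] at h; tauto
          · tauto
        rcases i with m | u
        · -- normal agent
          have hCival : coalValue v Ci = k := by
            rcases hCi' with rfl | rfl
            · exact hPval
            · exact hQval
          apply normal_no_dev v pref htrans hN_over_alone hN_alone_over_rest m Ci _
            hiCi hCival (Finset.mem_insert_self _ _)
          intro hXne
          rcases hC' with rfl | rfl | rfl
          · -- joining P : value v m + k ≠ k  (note m ∉ P as member since then Ci = Q, m ≠ j... )
            have hmP : (Sum.inl m : PartAgent n) ∉ P := by
              intro hmem
              rw [hP] at hmem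
              simp only [Finset.mem_insert, Finset.mem_singleton, Sum.inl.injEq,
                reduceCtorEq, false_or] at hmem
              subst hmem
              -- then Ci must be Q (since C ≠ Ci and C = P); but inl m ∈ Q fails
              rcases hCi' with rfl | rfl
              · exact hCne rfl
              · exact hjQ hiCi
            rw [coalValue_insert_inl v m P hmP, hPval]
            have := hv m
            omega
          · have hmQ : (Sum.inl m : PartAgent n) ∉ Q := by
              intro hmem
              rcases hCi' with rfl | rfl
              · -- Ci = P so m = j, but j ∉ Q
                rw [hP] at hiCi
                simp only [Finset.mem_insert, Finset.mem_singleton, Sum.inl.injEq,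
                  reduceCtorEq, false_or] at hiCi
                subst hiCi
                exact hjQ hmem
              · exact hCne rfl
            rw [coalValue_insert_inl v m Q hmQ, hQval]
            have := hv m
            omega
          · simp at hXne
        · -- G
          have hCiP : Ci = P := by
            rcases hCi' with rfl | rfl
            · rfl
            · exact absurd hiCi hGQ
          subst hCiP
          rcases hC' with rfl | rfl | rfl
          · exact absurd rfl hCne
          · -- joining Q
            by_cases hp : ∃ l : Fin n, insert (Sum.inr ()) Q = {Sum.inr (), Sum.inl l}
            · obtain ⟨l, hl⟩ := hp
              rw [hl]
              exact fun hs => hs.2 (hG_indiff j l)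
            · have hnsingle : insert (Sum.inr ()) Q ≠ {Sum.inr ()} := by
                intro h
                obtain ⟨x, hx⟩ := hQne
                have : x ∈ ({Sum.inr ()} : Finset (PartAgent n)) := h ▸ Finset.mem_insert_of_mem hx
                rw [Finset.mem_singleton] at this
                rw [this] at hx
                exact hGQ hx
              have hsp2 := hG_alone_over_rest _ (Finset.mem_insert_self _ _) hp hnsingle
              have hch : pref (Sum.inr ()) P (insert (Sum.inr ()) Q) :=
                htrans _ _ _ _ (hG_over_alone j).1 hsp2.1
              exact fun hs => hs.2 hch
          · rw [show insert (Sum.inr ()) (∅ : Finset (PartAgent n)) = {Sum.inr ()} from rfl]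
            exact fun hs => hs.2 (hG_over_alone j).1
    · -- no single v j = k : use {A I, A Iᶜ, {G}}
      push_neg at hex
      set AI : Finset (PartAgent n) := I.image Sum.inl with hAI
      set AJ : Finset (PartAgent n) := (Iᶜ : Finset (Fin n)).image Sum.inl with hAJ
      have hAIval : coalValue v AI = k := by rw [hAI, coalValue_image]; exact hIk
      have hAJval : coalValue v AJ = k := by rw [hAJ, coalValue_image]; exact hIck
      have hAIne : AI.Nonempty := by
        rw [Finset.nonempty_iff_ne_empty]; intro h
        rw [h, coalValue_empty] at hAIval; omega
      have hAJne : AJ.Nonempty := by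
        rw [Finset.nonempty_iff_ne_empty]; intro h
        rw [h, coalValue_empty] at hAJval; omega
      have hGAI : (Sum.inr () : PartAgent n) ∉ AI := by simp [hAI]
      have hGAJ : (Sum.inr () : PartAgent n) ∉ AJ := by simp [hAJ]
      have hdIJ : Disjoint AI AJ := by
        rw [hAI, hAJ]
        rw [Finset.disjoint_left]
        rintro x hx hx'
        simp only [Finset.mem_image] at hx hx'
        obtain ⟨a, ha, rfl⟩ := hx
        obtain ⟨b, hb, hba⟩ := hx'
        rw [Sum.inl.injEq] at hba
        subst hba
        simp at hb
        exact hb ha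
      -- an image coalition with value k is never turned into a pair by G joining
      have hnopair : ∀ (B : Finset (PartAgent n)), coalValue v B = k →
          (Sum.inr () : PartAgent n) ∉ B → B.Nonempty →
          ¬ ∃ l : Fin n, insert (Sum.inr ()) B = {Sum.inr (), Sum.inl l} := by
        rintro B hBval hGB hBne ⟨l, hl⟩
        have hBsub : B = {Sum.inl l} := by
          apply Finset.eq_singleton_iff_nonempty_unique_mem.2
          refine ⟨hBne, ?_⟩
          intro x hx
          have : x ∈ ({Sum.inr (), Sum.inl l} : Finset (PartAgent n)) :=
            hl ▸ Finset.mem_insert_of_mem hx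
          simp only [Finset.mem_insert, Finset.mem_singleton] at this
          rcases this with rfl | rfl
          · exact absurd hx hGB
          · rfl
        rw [hBsub, coalValue_singleton] at hBval
        exact hex l hBval
      refine ⟨{AI, AJ, {Sum.inr ()}}, ⟨?_, ?_, ?_⟩, ?_⟩
      · intro C hC
        simp only [Finset.mem_insert, Finset.mem_singleton] at hC
        rcases hC with rfl | rfl | rfl
        · exact hAIne
        · exact hAJne
        · exact ⟨_, Finset.mem_singleton_self _⟩
      · intro C hC D hD hCD
        have hdIG : Disjoint AI ({Sum.inr ()} : Finset (PartAgent n)) := by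
          rw [Finset.disjoint_right]
          intro x hx
          rw [Finset.mem_singleton] at hx
          subst hx
          exact hGAI
        have hdJG : Disjoint AJ ({Sum.inr ()} : Finset (PartAgent n)) := by
          rw [Finset.disjoint_right]
          intro x hx
          rw [Finset.mem_singleton] at hx
          subst hx
          exact hGAJ
        simp only [Finset.mem_insert, Finset.mem_singleton] at hC hD
        rcases hC with rfl | rfl | rfl <;> rcases hD with rfl | rfl | rfl
        · exact absurd rfl hCD
        · exact hdIJ
        · exact hdIG
        · exact hdIJ.symm
        · exact absurd rfl hCD
        · exact hdJG
        · exact hdIG.symm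
        · exact hdJG.symm
        · exact absurd rfl hCD
      · intro i
        rcases i with m | u
        · by_cases hm : m ∈ I
          · exact ⟨AI, by simp, by simp [hAI, hm]⟩
          · exact ⟨AJ, by simp, by simp [hAJ, hm]⟩
        · exact ⟨{Sum.inr ()}, by simp, by simp⟩
      · intro i Ci hCi hiCi C hC hCne
        have hCi' : Ci = AI ∨ Ci = AJ ∨ Ci = {Sum.inr ()} := by
          simpa using hCi
        have hC' : C = AI ∨ C = AJ ∨ C = {Sum.inr ()} ∨ C = ∅ := by
          rcases hC with h | h
          · simp only [Finset.mem_insert, Finset.mem_singleton] at h; tauto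
          · tauto
        rcases i with m | u
        · -- normal agent: Ci = AI or AJ, value k
          have hCival : coalValue v Ci = k := by
            rcases hCi' with rfl | rfl | rfl
            · exact hAIval
            · exact hAJval
            · simp at hiCi
          apply normal_no_dev v pref htrans hN_over_alone hN_alone_over_rest m Ci _
            hiCi hCival (Finset.mem_insert_self _ _)
          intro hXne
          have hmval := hv m
          rcases hC' with rfl | rfl | rfl | rfl
          · have hmC : (Sum.inl m : PartAgent n) ∉ AI := by
              intro hmem
              rcases hCi' with rfl | rfl | rfl
              · exact hCne rfl
              · exact Finset.disjoint_left.1 hdIJ hmem hiCi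
              · simp at hiCi
            rw [coalValue_insert_inl v m AI hmC, hAIval]
            omega
          · have hmC : (Sum.inl m : PartAgent n) ∉ AJ := by
              intro hmem
              rcases hCi' with rfl | rfl | rfl
              · exact Finset.disjoint_left.1 hdIJ hiCi hmem
              · exact hCne rfl
              · simp at hiCi
            rw [coalValue_insert_inl v m AJ hmC, hAJval]
            omega
          · rw [coalValue_insert_inl v m {Sum.inr ()} (by simp),
              show ({Sum.inr ()} : Finset (PartAgent n)) = insert (Sum.inr ()) ∅ from rfl,
              coalValue_insert_inr, coalValue_empty]
            have := hex m
            omega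
          · simp at hXne
        · -- G : Ci = {G}
          have hCiG : Ci = {Sum.inr ()} := by
            rcases hCi' with rfl | rfl | rfl
            · exact absurd hiCi hGAI
            · exact absurd hiCi hGAJ
            · rfl
          subst hCiG
          rcases hC' with rfl | rfl | rfl | rfl
          · have hnp := hnopair AI hAIval hGAI hAIne
            have hnsingle : insert (Sum.inr ()) AI ≠ {Sum.inr ()} := by
              intro h
              obtain ⟨x, hx⟩ := hAIne
              have : x ∈ ({Sum.inr ()} : Finset (PartAgent n)) :=
                h ▸ Finset.mem_insert_of_mem hx
              rw [Finset.mem_singleton] at this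
              rw [this] at hx
              exact hGAI hx
            have hsp := hG_alone_over_rest _ (Finset.mem_insert_self _ _) hnp hnsingle
            exact fun hs => hsp.2 hs.1
          · have hnp := hnopair AJ hAJval hGAJ hAJne
            have hnsingle : insert (Sum.inr ()) AJ ≠ {Sum.inr ()} := by
              intro h
              obtain ⟨x, hx⟩ := hAJne
              have : x ∈ ({Sum.inr ()} : Finset (PartAgent n)) :=
                h ▸ Finset.mem_insert_of_mem hx
              rw [Finset.mem_singleton] at this
              rw [this] at hx
              exact hGAJ hx
            have hsp := hG_alone_over_rest _ (Finset.mem_insert_self _ _) hnp hnsingle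
            exact fun hs => hsp.2 hs.1
          · exact absurd rfl hCne
          · rw [show insert (Sum.inr ()) (∅ : Finset (PartAgent n)) = {Sum.inr ()} from rfl]
            exact fun hs => hs.2 hs.1
end

section
/- Let ω, κ ≥ 1 be integers, let S_1, …, S_ω be finite sets of κ-dimensional vectors of nonnegative integers, and let t be a κ-dimensional vector of nonnegative integers. Construct the hedonic game with agents: one marker agent M_i for each i ∈ {1, …, ω}, and, for each j ∈ {1, …, κ}, exactly t[j] normal agents of color g_j. Call a coalition C satisfying for M_i if C contains M_i, contains no marker agent other than M_i, and there exists s ∈ S_i such that for every j ∈ {1, …, κ} the number of normal agents of color g_j in C equals s[j]. Preferences: M_i is indifferent among all coalitions satisfying for M_i, strictly prefers each of them to {M_i}, and strictly prefers {M_i} to every other coalition containing M_i; every normal agent a is indifferent among all coalitions containing a that contain exactly one marker agent, strictly prefers these to coalitions containing a with no marker agent (among which a is indifferent), and strictly prefers the latter to coalitions containing a with at least two marker agents (among which a is indifferent). Then the following are equivalent: (1) the game admits a Nash stable outcome consisting of at most ω coalitions; (2) the game admits an individually stable outcome consisting of at most ω coalitions; (3) there is a choice, for each i ∈ {1, …,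 ω}, of either a vector s_i ∈ S_i or nothing, such that the chosen vectors sum to t. -/
/-- The agents: one marker agent `Sum.inl i` per `i`, and for each color `j` exactly
`t j` normal agents `Sum.inr ⟨j, x⟩` of color `j`. -/
abbrev MSSAgent (ω κ : ℕ) (t : Fin κ → ℕ) := Fin ω ⊕ (Σ j : Fin κ, Fin (t j))

/-- The number of marker agents in a coalition. -/
def markerCount {ω κ : ℕ} {t : Fin κ → ℕ} (C : Finset (MSSAgent ω κ t)) : ℕ :=
  (Finset.univ.filter (fun i : Fin ω => Sum.inl i ∈ C)).card

/-- The number of normal agents of color `j` in a coalition. -/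
def colorCount {ω κ : ℕ} {t : Fin κ → ℕ} (j : Fin κ) (C : Finset (MSSAgent ω κ t)) : ℕ :=
  (Finset.univ.filter (fun x : Fin (t j) => Sum.inr (⟨j, x⟩ : Σ j : Fin κ, Fin (t j)) ∈ C)).card

/-- A coalition is satisfying for marker `i` if it contains `M_i`, contains no other
marker, and for some vector `s ∈ S i`, contains exactly `s j` normal agents of every
color `j`. -/
def Satisfying {ω κ : ℕ} {t : Fin κ → ℕ} (S : Fin ω → Finset (Fin κ → ℕ)) (i : Fin ω)
    (C : Finset (MSSAgent ω κ t)) : Prop :=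
  Sum.inl i ∈ C ∧ (∀ i' : Fin ω, Sum.inl i' ∈ C → i' = i) ∧
  ∃ s ∈ S i, ∀ j : Fin κ, colorCount j C = s j

/-! In a stable outcome no marker agent wants to leave for being alone, so each marker sits in a
coalition that is satisfying for it or contains it alone; such a coalition holds no other marker,
so with at most `ω` coalitions every coalition is of this kind, and their color counts form the
choice of vectors. Conversely, vectors summing to `t` tell how to distribute the normal agents among
the markers; in that outcome a marker cannot do better by leaving, and a normal agent already shares
its coalition with exactly one marker, so it is Nash stable. -/

open Finset

section General

variable {α : Type*} {pref : α → Finset α → Finset α → Prop} {i : α} {X Y : Finset α}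

theorem not_sPref_self : ¬ SPref pref i X X := fun h => h.2 h.1

theorem not_sPref_of_pref (h : pref i X Y) : ¬ SPref pref i Y X := fun h' => h'.2 h

theorem SPref.not_sPref (h : SPref pref i X Y) : ¬ SPref pref i Y X := not_sPref_of_pref h.1

theorem NashStable.indStable [DecidableEq α] {Part : Finset (Finset α)}
    (h : NashStable pref Part) : IndStable pref Part :=
  fun i Ci hCi hiCi C hC hne hdev => h i Ci hCi hiCi C hC hne hdev.1

variable [Fintype α] [DecidableEq α] {Part : Finset (Finset α)}

theorem IsOutcome.eq_of_mem (hP : IsOutcome Part) {C D : Finset α} {a : α} (hC : C ∈ Part)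
    (hD : D ∈ Part) (haC : a ∈ C) (haD : a ∈ D) : C = D := by
  by_contra hne
  exact disjoint_left.mp (hP.2.1 C hC D hD hne) haC haD

theorem IsOutcome.sum_card_filter_mem (hP : IsOutcome Part) {β : Type*} [Fintype β]
    (g : β → α) : ∑ C ∈ Part, #{b | g b ∈ C} = Fintype.card β := by
  have hunique : ∀ b, #{C ∈ Part | g b ∈ C} = 1 := fun b => by
    obtain ⟨C, hC, hbC⟩ := hP.2.2 (g b)
    refine card_eq_one.mpr ⟨C, ?_⟩
    ext D
    simp only [mem_filter, mem_singleton]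
    exact ⟨fun ⟨hD, hbD⟩ => hP.eq_of_mem hD hC hbD hbC, by rintro rfl; exact ⟨hC, hbC⟩⟩
  calc ∑ C ∈ Part, #{b | g b ∈ C}
      = ∑ b, #{C ∈ Part | g b ∈ C} :=
        sum_card_bipartiteAbove_eq_sum_card_bipartiteBelow (fun C b => g b ∈ C)
    _ = Fintype.card β := by simp [hunique]

theorem IsOutcome.exists_mem_of_card_le (hP : IsOutcome Part) {ι : Type*} [Fintype ι]
    (g : ι → α) (hcard : #Part ≤ Fintype.card ι)
    (hsep : ∀ C ∈ Part, ∀ i i', g i ∈ C → g i' ∈ C → i = i') :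
    ∀ C ∈ Part, ∃ i, g i ∈ C := by
  intro C hC
  by_contra! hmiss
  choose c hcP hgc using fun i => hP.2.2 (g i)
  have hmaps : ∀ i ∈ (univ : Finset ι), c i ∈ Part.erase C := fun i _ =>
    mem_erase.mpr ⟨fun h => hmiss i (h ▸ hgc i), hcP i⟩
  have hinj : Set.InjOn c (univ : Finset ι) := fun i _ i' _ h =>
    hsep (c i) (hcP i) i i' (hgc i) (h ▸ hgc i')
  have hle := card_le_card_of_injOn c hmaps hinj
  rw [card_univ, card_erase_of_mem hC] at hle
  have hpos := card_pos.mpr ⟨C, hC⟩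
  omega

theorem isOutcome_image_fibers {ι : Type*} [Fintype ι] [DecidableEq ι] (g : α → ι)
    (hg : Function.Surjective g) : IsOutcome (univ.image fun i => ({a | g a = i} : Finset α)) := by
  refine ⟨?_, ?_, fun a => ⟨_, mem_image_of_mem _ (mem_univ (g a)), by simp⟩⟩
  · simp only [mem_image, mem_univ, true_and, forall_exists_index, forall_apply_eq_imp_iff]
    intro i
    obtain ⟨a, rfl⟩ := hg i
    exact ⟨a, by simp⟩
  · simp only [mem_image, mem_univ, true_and, forall_exists_index, forall_apply_eq_imp_iff]
    intro i i' hne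
    exact disjoint_filter.mpr fun a _ h h' => hne (by rw [← h, ← h'])

end General

theorem exists_fiber_card_eq {β ι : Type*} [Fintype β] [Fintype ι] [DecidableEq ι]
    (n : ι → ℕ) (h : ∑ i, n i = Fintype.card β) :
    ∃ g : β → ι, ∀ i, #{b | g b = i} = n i := by
  obtain ⟨e⟩ : Nonempty (β ≃ Σ i, Fin (n i)) :=
    Fintype.card_eq.mp (by simp [h])
  refine ⟨fun b => (e b).1, fun i => ?_⟩
  rw [← Fintype.card_subtype,
    Fintype.card_congr ((e.subtypeEquiv fun _ => Iff.rfl).trans (Equiv.sigmaSubtype i))]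
  simp

theorem exists_option_getD_iff {ι V : Type*} [Fintype ι] [AddCommMonoid V] (S : ι → Finset V)
    (t : V) :
    (∃ f : ι → Option V, (∀ i s, f i = some s → s ∈ S i) ∧ ∑ i, (f i).getD 0 = t) ↔
      ∃ v : ι → V, (∀ i, v i ∈ S i ∨ v i = 0) ∧ ∑ i, v i = t := by
  classical
  constructor
  · rintro ⟨f, hfS, hsum⟩
    refine ⟨fun i => (f i).getD 0, fun i => ?_, hsum⟩
    dsimp only
    cases h : f i with
    | none => exact Or.inr rfl
    | some s => exact Or.inl (hfS i s h)
  · rintro ⟨v, hv, hsum⟩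
    refine ⟨fun i => if v i ∈ S i then some (v i) else none, fun i s h => ?_, ?_⟩
    · dsimp only at h
      split_ifs at h with hi
      exact Option.some_inj.mp h ▸ hi
    · rw [← hsum]
      refine sum_congr rfl fun i _ => ?_
      dsimp only
      split_ifs with hi
      · rfl
      · exact ((hv i).resolve_left hi).symm

section Game

variable {ω κ : ℕ} {t : Fin κ → ℕ}

def colorProfile (C : Finset (MSSAgent ω κ t)) : Fin κ → ℕ := fun j => colorCount j C

def Settled (S : Fin ω → Finset (Fin κ → ℕ)) (i : Fin ω) (C : Finset (MSSAgent ω κ t)) :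
    Prop :=
  Satisfying S i C ∨ C = {Sum.inl i}

variable {S : Fin ω → Finset (Fin κ → ℕ)} {i i' : Fin ω} {C : Finset (MSSAgent ω κ t)}

theorem Settled.mem (h : Settled S i C) : Sum.inl i ∈ C := by
  rcases h with h | rfl
  · exact h.1
  · exact mem_singleton_self _

theorem Settled.eq_of_mem (h : Settled S i C) (h' : Sum.inl i' ∈ C) : i' = i := by
  rcases h with h | rfl
  · exact h.2.1 i' h'
  · simpa using h'

theorem Settled.markerCount_eq_one (h : Settled S i C) : markerCount C = 1 := by
  refine card_eq_one.mpr ⟨i, ?_⟩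
  ext i'
  simp only [mem_filter, mem_univ, true_and, mem_singleton]
  exact ⟨h.eq_of_mem, by rintro rfl; exact h.mem⟩

theorem Settled.colorProfile_mem_or_eq_zero (h : Settled S i C) :
    colorProfile C ∈ S i ∨ colorProfile C = 0 := by
  rcases h with ⟨-, -, s, hs, hcount⟩ | rfl
  · left
    convert hs
    exact funext hcount
  · right
    funext j
    simp [colorProfile, colorCount]

theorem settled_of_colorProfile (hi : Sum.inl i ∈ C) (honly : ∀ i', Sum.inl i' ∈ C → i' = i)
    (h : colorProfile C ∈ S i ∨ colorProfile C = 0) : Settled S i C := by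
  rcases h with h | h
  · exact Or.inl ⟨hi, honly, _, h, fun _ => rfl⟩
  · refine Or.inr (eq_singleton_iff_unique_mem.mpr ⟨hi, ?_⟩)
    rintro (i' | ⟨j, x⟩) ha
    · rw [honly i' ha]
    · have hj : colorCount j C = 0 := congrFun h j
      rw [colorCount, card_eq_zero, filter_eq_empty_iff] at hj
      exact absurd ha (hj (mem_univ x))

theorem markerCount_insert_inr (a : Σ j : Fin κ, Fin (t j)) (C : Finset (MSSAgent ω κ t)) :
    markerCount (insert (Sum.inr a) C) = markerCount C := by
  simp [markerCount]

theorem IsOutcome.sum_colorCount {Part : Finset (Finset (MSSAgent ω κ t))} (hP : IsOutcome Part)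
    (j : Fin κ) : ∑ C ∈ Part, colorCount j C = t j :=
  (hP.sum_card_filter_mem (fun x : Fin (t j) => (Sum.inr ⟨j, x⟩ : MSSAgent ω κ t))).trans
    (Fintype.card_fin _)

variable
  {pref : MSSAgent ω κ t → Finset (MSSAgent ω κ t) → Finset (MSSAgent ω κ t) → Prop}

theorem Settled.not_sPref_singleton
    (hM_over_alone : ∀ (i : Fin ω) (C : Finset (MSSAgent ω κ t)),
      Satisfying S i C → SPref pref (Sum.inl i) C {Sum.inl i})
    (h : Settled S i C) : ¬ SPref pref (Sum.inl i) {Sum.inl i} C := by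
  rcases h with h | rfl
  · exact (hM_over_alone i C h).not_sPref
  · exact not_sPref_self

theorem Settled.not_sPref_of_not_settled
    (htrans : ∀ (a : MSSAgent ω κ t) (X Y Z : Finset (MSSAgent ω κ t)),
      pref a X Y → pref a Y Z → pref a X Z)
    (hM_over_alone : ∀ (i : Fin ω) (C : Finset (MSSAgent ω κ t)),
      Satisfying S i C → SPref pref (Sum.inl i) C {Sum.inl i})
    (hM_alone_over_rest : ∀ (i : Fin ω) (C : Finset (MSSAgent ω κ t)),
      Sum.inl i ∈ C → ¬ Satisfying S i C → C ≠ {Sum.inl i} →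
      SPref pref (Sum.inl i) {Sum.inl i} C)
    (h : Settled S i C) {X : Finset (MSSAgent ω κ t)} (hX : Sum.inl i ∈ X)
    (hXns : ¬ Settled S i X) : ¬ SPref pref (Sum.inl i) X C := by
  have hX' := hM_alone_over_rest i X hX (fun h' => hXns (Or.inl h')) (fun h' => hXns (Or.inr h'))
  rcases h with h | rfl
  · exact not_sPref_of_pref (htrans _ _ _ _ (hM_over_alone i C h).1 hX'.1)
  · exact hX'.not_sPref

theorem not_sPref_of_markerCount_le_one
    (hN_indiff_one : ∀ (a : Σ j : Fin κ, Fin (t j)) (C C' : Finset (MSSAgent ω κ t)),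
      Sum.inr a ∈ C → Sum.inr a ∈ C' → markerCount C = 1 → markerCount C' = 1 →
      pref (Sum.inr a) C C')
    (hN_one_over_zero : ∀ (a : Σ j : Fin κ, Fin (t j)) (C C' : Finset (MSSAgent ω κ t)),
      Sum.inr a ∈ C → Sum.inr a ∈ C' → markerCount C = 1 → markerCount C' = 0 →
      SPref pref (Sum.inr a) C C')
    {a : Σ j : Fin κ, Fin (t j)} {X : Finset (MSSAgent ω κ t)} (haC : Sum.inr a ∈ C)
    (hC : markerCount C = 1) (haX : Sum.inr a ∈ X) (hX : markerCount X ≤ 1) :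
    ¬ SPref pref (Sum.inr a) X C := by
  rcases Nat.le_one_iff_eq_zero_or_eq_one.mp hX with hX | hX
  · exact (hN_one_over_zero a C X haC haX hC hX).not_sPref
  · exact not_sPref_of_pref (hN_indiff_one a C X haC haX hC hX)

variable {Part : Finset (Finset (MSSAgent ω κ t))}

theorem nashStable_of_settled
    (htrans : ∀ (a : MSSAgent ω κ t) (X Y Z : Finset (MSSAgent ω κ t)),
      pref a X Y → pref a Y Z → pref a X Z)
    (hM_over_alone : ∀ (i : Fin ω) (C : Finset (MSSAgent ω κ t)),
      Satisfying S i C → SPref pref (Sum.inl i) C {Sum.inl i})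
    (hM_alone_over_rest : ∀ (i : Fin ω) (C : Finset (MSSAgent ω κ t)),
      Sum.inl i ∈ C → ¬ Satisfying S i C → C ≠ {Sum.inl i} →
      SPref pref (Sum.inl i) {Sum.inl i} C)
    (hN_indiff_one : ∀ (a : Σ j : Fin κ, Fin (t j)) (C C' : Finset (MSSAgent ω κ t)),
      Sum.inr a ∈ C → Sum.inr a ∈ C' → markerCount C = 1 → markerCount C' = 1 →
      pref (Sum.inr a) C C')
    (hN_one_over_zero : ∀ (a : Σ j : Fin κ, Fin (t j)) (C C' : Finset (MSSAgent ω κ t)),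
      Sum.inr a ∈ C → Sum.inr a ∈ C' → markerCount C = 1 → markerCount C' = 0 →
      SPref pref (Sum.inr a) C C')
    (hP : IsOutcome Part) (hset : ∀ C ∈ Part, ∃ i, Settled S i C) : NashStable pref Part := by
  intro a Ci hCi haCi C hC hne
  obtain ⟨i, hi⟩ := hset Ci hCi
  rcases a with m | a
  · obtain rfl := hi.eq_of_mem haCi
    rcases hC with hC | rfl
    · obtain ⟨i', hi'⟩ := hset C hC
      have hi'm : i' ≠ m := fun h => hne (hP.eq_of_mem hC hCi (h ▸ hi'.mem) haCi)
      refine hi.not_sPref_of_not_settled htrans hM_over_alone hM_alone_over_rest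
        (mem_insert_self _ _) fun hX => hi'm ?_
      exact hX.eq_of_mem (mem_insert_of_mem hi'.mem)
    · exact hi.not_sPref_singleton hM_over_alone
  · refine not_sPref_of_markerCount_le_one hN_indiff_one hN_one_over_zero haCi
      hi.markerCount_eq_one (mem_insert_self _ _) ?_
    rw [markerCount_insert_inr]
    rcases hC with hC | rfl
    · obtain ⟨i', hi'⟩ := hset C hC
      exact hi'.markerCount_eq_one.le
    · simp [markerCount]

theorem IndStable.settled_of_mem
    (hM_alone_over_rest : ∀ (i : Fin ω) (C : Finset (MSSAgent ω κ t)),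
      Sum.inl i ∈ C → ¬ Satisfying S i C → C ≠ {Sum.inl i} →
      SPref pref (Sum.inl i) {Sum.inl i} C)
    (hIS : IndStable pref Part) (hC : C ∈ Part) (hi : Sum.inl i ∈ C) : Settled S i C := by
  by_contra h
  refine hIS (Sum.inl i) C hC hi ∅ (Or.inr rfl) (ne_empty_of_mem hi).symm ⟨?_, by simp⟩
  exact hM_alone_over_rest i C hi (fun h' => h (Or.inl h')) (fun h' => h (Or.inr h'))

theorem IndStable.exists_settled
    (hM_alone_over_rest : ∀ (i : Fin ω) (C : Finset (MSSAgent ω κ t)),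
      Sum.inl i ∈ C → ¬ Satisfying S i C → C ≠ {Sum.inl i} →
      SPref pref (Sum.inl i) {Sum.inl i} C)
    (hIS : IndStable pref Part) (hP : IsOutcome Part) (hcard : #Part ≤ ω) :
    ∀ C ∈ Part, ∃ i, Settled S i C := by
  have hsettled {C i} := hIS.settled_of_mem hM_alone_over_rest (S := S) (C := C) (i := i)
  intro C hC
  obtain ⟨i, hi⟩ := hP.exists_mem_of_card_le Sum.inl (by simpa using hcard)
    (fun C hC i _ hi hi' => (hsettled hC hi').eq_of_mem hi) C hC
  exact ⟨i, hsettled hC hi⟩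

theorem exists_colorProfile_sum_eq_of_settled (hP : IsOutcome Part)
    (hset : ∀ C ∈ Part, ∃ i, Settled S i C) :
    ∃ v : Fin ω → Fin κ → ℕ, (∀ i, v i ∈ S i ∨ v i = 0) ∧ ∑ i, v i = t := by
  choose c hcP hcmem using fun i => hP.2.2 (Sum.inl i)
  have hc : ∀ i, Settled S i (c i) := fun i => by
    obtain ⟨i', hi'⟩ := hset (c i) (hcP i)
    obtain rfl := hi'.eq_of_mem (hcmem i)
    exact hi'
  have hinj : Function.Injective c := fun i i' h => ((hc i).eq_of_mem (h ▸ hcmem i')).symm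
  have himage : univ.image c = Part := by
    refine Subset.antisymm (image_subset_iff.mpr fun i _ => hcP i) fun C hC => ?_
    obtain ⟨i, hi⟩ := hset C hC
    exact mem_image.mpr ⟨i, mem_univ _, hP.eq_of_mem (hcP i) hC (hcmem i) hi.mem⟩
  refine ⟨fun i => colorProfile (c i), fun i => (hc i).colorProfile_mem_or_eq_zero,
    funext fun j => ?_⟩
  rw [Finset.sum_apply, ← hP.sum_colorCount j, ← himage, sum_image hinj.injOn]
  rfl

theorem exists_settled_outcome {v : Fin ω → Fin κ → ℕ} (hv : ∀ i, v i ∈ S i ∨ v i = 0)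
    (hsum : ∑ i, v i = t) :
    ∃ Part : Finset (Finset (MSSAgent ω κ t)),
      IsOutcome Part ∧ #Part ≤ ω ∧ ∀ C ∈ Part, ∃ i, Settled S i C := by
  have hfibers (j : Fin κ) : ∃ g : Fin (t j) → Fin ω, ∀ i, #{x | g x = i} = v i j :=
    exists_fiber_card_eq (fun i => v i j) (by simp [← hsum, Finset.sum_apply])
  choose g hg using hfibers
  let assign : MSSAgent ω κ t → Fin ω := Sum.elim id fun a => g a.1 a.2
  refine ⟨_, isOutcome_image_fibers assign fun i => ⟨Sum.inl i, rfl⟩,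
    card_image_le.trans (by simp), ?_⟩
  simp only [mem_image, mem_univ, true_and, forall_exists_index, forall_apply_eq_imp_iff]
  intro i
  refine ⟨i, settled_of_colorProfile (by simp [assign]) (by simp [assign]) ?_⟩
  have hprofile : colorProfile ({a | assign a = i} : Finset (MSSAgent ω κ t)) = v i :=
    funext fun j => by simp [colorProfile, colorCount, assign, hg]
  rw [hprofile]
  exact hv i

end Game

theorem mss_reduction_general (ω κ : ℕ)
    (S : Fin ω → Finset (Fin κ → ℕ)) (t : Fin κ → ℕ)
    (pref : MSSAgent ω κ t → Finset (MSSAgent ω κ t) → Finset (MSSAgent ω κ t) → Prop)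
    (htrans : ∀ (a : MSSAgent ω κ t) (X Y Z : Finset (MSSAgent ω κ t)),
      pref a X Y → pref a Y Z → pref a X Z)
    -- it strictly prefers each of them to being alone
    (hM_over_alone : ∀ (i : Fin ω) (C : Finset (MSSAgent ω κ t)),
      Satisfying S i C → SPref pref (Sum.inl i) C {Sum.inl i})
    -- and strictly prefers being alone to every other coalition containing it
    (hM_alone_over_rest : ∀ (i : Fin ω) (C : Finset (MSSAgent ω κ t)),
      Sum.inl i ∈ C → ¬ Satisfying S i C → C ≠ {Sum.inl i} →
      SPref pref (Sum.inl i) {Sum.inl i} C)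
    -- normal agents: indifferent among coalitions with exactly one marker agent
    (hN_indiff_one : ∀ (a : Σ j : Fin κ, Fin (t j)) (C C' : Finset (MSSAgent ω κ t)),
      Sum.inr a ∈ C → Sum.inr a ∈ C' → markerCount C = 1 → markerCount C' = 1 →
      pref (Sum.inr a) C C')
    -- strictly preferring these to coalitions with no marker agent
    (hN_one_over_zero : ∀ (a : Σ j : Fin κ, Fin (t j)) (C C' : Finset (MSSAgent ω κ t)),
      Sum.inr a ∈ C → Sum.inr a ∈ C' → markerCount C = 1 → markerCount C' = 0 →
      SPref pref (Sum.inr a) C C') :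
    ((∃ Part : Finset (Finset (MSSAgent ω κ t)),
        IsOutcome Part ∧ Part.card ≤ ω ∧ NashStable pref Part) ↔
      (∃ Part : Finset (Finset (MSSAgent ω κ t)),
        IsOutcome Part ∧ Part.card ≤ ω ∧ IndStable pref Part)) ∧
    ((∃ Part : Finset (Finset (MSSAgent ω κ t)),
        IsOutcome Part ∧ Part.card ≤ ω ∧ IndStable pref Part) ↔
      (∃ f : Fin ω → Option (Fin κ → ℕ),
        (∀ (i : Fin ω) (s : Fin κ → ℕ), f i = some s → s ∈ S i) ∧
        ∀ j : Fin κ, (∑ i : Fin ω, ((f i).getD 0) j) = t j)) := by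
  have settled_of_indStable {Part} (hP : IsOutcome Part) (hcard : #Part ≤ ω)
      (hIS : IndStable pref Part) : ∀ C ∈ Part, ∃ i, Settled S i C :=
    hIS.exists_settled hM_alone_over_rest hP hcard
  have nashStable {Part} (hP : IsOutcome Part) (hset : ∀ C ∈ Part, ∃ i, Settled S i C) :
      NashStable pref Part :=
    nashStable_of_settled htrans hM_over_alone hM_alone_over_rest hN_indiff_one
      hN_one_over_zero hP hset
  have hsolution : (∃ f : Fin ω → Option (Fin κ → ℕ),
        (∀ (i : Fin ω) (s : Fin κ → ℕ), f i = some s → s ∈ S i) ∧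
        ∀ j : Fin κ, (∑ i : Fin ω, ((f i).getD 0) j) = t j) ↔
      ∃ v : Fin ω → Fin κ → ℕ, (∀ i, v i ∈ S i ∨ v i = 0) ∧ ∑ i, v i = t := by
    simpa only [funext_iff, Finset.sum_apply] using exists_option_getD_iff S t
  refine ⟨⟨fun ⟨P, hP, hcard, hNS⟩ => ⟨P, hP, hcard, hNS.indStable⟩,
    fun ⟨P, hP, hcard, hIS⟩ =>
      ⟨P, hP, hcard, nashStable hP (settled_of_indStable hP hcard hIS)⟩⟩,
    Iff.trans ⟨fun ⟨P, hP, hcard, hIS⟩ => ?_, fun ⟨v, hv, hsum⟩ => ?_⟩ hsolution.symm⟩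
  · exact exists_colorProfile_sum_eq_of_settled hP (settled_of_indStable hP hcard hIS)
  · obtain ⟨P, hP, hcard, hset⟩ := exists_settled_outcome hv hsum
    exact ⟨P, hP, hcard, (nashStable hP hset).indStable⟩

/-- The hedonic game built from a Multidimensional Subset Sum instance
admits a Nash stable outcome with at most ω coalitions iff it admits an individually
stable outcome with at most ω coalitions iff one can pick at most one vector from each
set so that the chosen vectors sum to the target. -/
theorem mss_reduction (ω κ : ℕ) (hω : 1 ≤ ω) (hκ : 1 ≤ κ)
    (S : Fin ω → Finset (Fin κ → ℕ)) (t : Fin κ → ℕ)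
    (pref : MSSAgent ω κ t → Finset (MSSAgent ω κ t) → Finset (MSSAgent ω κ t) → Prop)
    (htot : ∀ (a : MSSAgent ω κ t) (X Y : Finset (MSSAgent ω κ t)),
      a ∈ X → a ∈ Y → pref a X Y ∨ pref a Y X)
    (htrans : ∀ (a : MSSAgent ω κ t) (X Y Z : Finset (MSSAgent ω κ t)),
      pref a X Y → pref a Y Z → pref a X Z)
    -- marker agent Mᵢ is indifferent among all coalitions satisfying for Mᵢ
    (hM_indiff : ∀ (i : Fin ω) (C C' : Finset (MSSAgent ω κ t)),
      Satisfying S i C → Satisfying S i C' → pref (Sum.inl i) C C')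
    -- it strictly prefers each of them to being alone
    (hM_over_alone : ∀ (i : Fin ω) (C : Finset (MSSAgent ω κ t)),
      Satisfying S i C → SPref pref (Sum.inl i) C {Sum.inl i})
    -- and strictly prefers being alone to every other coalition containing it
    (hM_alone_over_rest : ∀ (i : Fin ω) (C : Finset (MSSAgent ω κ t)),
      Sum.inl i ∈ C → ¬ Satisfying S i C → C ≠ {Sum.inl i} →
      SPref pref (Sum.inl i) {Sum.inl i} C)
    -- normal agents: indifferent among coalitions with exactly one marker agent
    (hN_indiff_one : ∀ (a : Σ j : Fin κ, Fin (t j)) (C C' : Finset (MSSAgent ω κ t)),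
      Sum.inr a ∈ C → Sum.inr a ∈ C' → markerCount C = 1 → markerCount C' = 1 →
      pref (Sum.inr a) C C')
    -- strictly preferring these to coalitions with no marker agent
    (hN_one_over_zero : ∀ (a : Σ j : Fin κ, Fin (t j)) (C C' : Finset (MSSAgent ω κ t)),
      Sum.inr a ∈ C → Sum.inr a ∈ C' → markerCount C = 1 → markerCount C' = 0 →
      SPref pref (Sum.inr a) C C')
    -- indifferent among coalitions with no marker agent
    (hN_indiff_zero : ∀ (a : Σ j : Fin κ, Fin (t j)) (C C' : Finset (MSSAgent ω κ t)),
      Sum.inr a ∈ C → Sum.inr a ∈ C' → markerCount C = 0 → markerCount C' = 0 →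
      pref (Sum.inr a) C C')
    -- strictly preferring the latter to coalitions with at least two marker agents
    (hN_zero_over_two : ∀ (a : Σ j : Fin κ, Fin (t j)) (C C' : Finset (MSSAgent ω κ t)),
      Sum.inr a ∈ C → Sum.inr a ∈ C' → markerCount C = 0 → 2 ≤ markerCount C' →
      SPref pref (Sum.inr a) C C')
    -- indifferent among coalitions with at least two marker agents
    (hN_indiff_two : ∀ (a : Σ j : Fin κ, Fin (t j)) (C C' : Finset (MSSAgent ω κ t)),
      Sum.inr a ∈ C → Sum.inr a ∈ C' → 2 ≤ markerCount C → 2 ≤ markerCount C' →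
      pref (Sum.inr a) C C') :
    ((∃ Part : Finset (Finset (MSSAgent ω κ t)),
        IsOutcome Part ∧ Part.card ≤ ω ∧ NashStable pref Part) ↔
      (∃ Part : Finset (Finset (MSSAgent ω κ t)),
        IsOutcome Part ∧ Part.card ≤ ω ∧ IndStable pref Part)) ∧
    ((∃ Part : Finset (Finset (MSSAgent ω κ t)),
        IsOutcome Part ∧ Part.card ≤ ω ∧ IndStable pref Part) ↔
      (∃ f : Fin ω → Option (Fin κ → ℕ),
        (∀ (i : Fin ω) (s : Fin κ → ℕ), f i = some s → s ∈ S i) ∧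
        ∀ j : Fin κ, (∑ i : Fin ω, ((f i).getD 0) j) = t j)) :=
  mss_reduction_general ω κ S t pref htrans hM_over_alone hM_alone_over_rest hN_indiff_one
    hN_one_over_zero
end

section
/- Let (P, A, (S_p)_{p∈P}) be an sGASP instance and set s = |P| + 1. Construct the sGASP instance (P̃, A, (S̃_q)_{q∈P̃}) where P̃ consists of (2s|A|+1)·|A| activity participants — with 2s|A|+1 of them associated to each activity a ∈ A, each having approval set {(a, t) : t odd, 2s|A|+1 ≤ t ≤ 2s|A|+2s−1} — together with 2|P| pair participants — two associated to each p ∈ P, each having approval set {(a, 2t + 2s|A| + 1) : (a, t) ∈ S_p}. Then (P, A, (S_p)_{p∈P}) has a stable assignment if and only if (P̃, A, (S̃_q)_{q∈P̃}) has a stable assignment. -/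
open Finset

section Helpers

lemma card_filter_sum_ty {α β : Type*} [Fintype α] [Fintype β]
    (F : α ⊕ β → Prop) [DecidablePred F] :
    (univ.filter F).card
      = (univ.filter fun a => F (Sum.inl a)).card
        + (univ.filter fun b => F (Sum.inr b)).card := by
  rw [← Finset.univ_disjSum_univ]
  have : (univ.disjSum univ).filter F
      = (univ.filter fun a => F (Sum.inl a)).disjSum (univ.filter fun b => F (Sum.inr b)) := by
    ext x
    cases x <;> simp
  rw [this, card_disjSum]

lemma card_filter_prod_two {α : Type*} [Fintype α]
    (F : α × Fin 2 → Prop) [DecidablePred F] :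
    (univ.filter F).card
      = (univ.filter fun a => F (a, 0)).card + (univ.filter fun a => F (a, 1)).card := by
  rw [card_eq_sum_card_fiberwise (f := Prod.snd) (t := univ) (fun x _ => mem_univ _)]
  rw [Fin.sum_univ_two]
  congr 1 <;>
  · apply Finset.card_bij (fun x _ => x.1)
    · intro x hx
      simp only [mem_filter, mem_univ, true_and] at hx ⊢
      obtain ⟨h1, h2⟩ := hx
      first
        | exact (by cases x; cases h2; exact h1)
    · intro x hx y hy h
      simp only [mem_filter] at hx hy
      obtain ⟨-, h2⟩ := hx; obtain ⟨-, h3⟩ := hy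
      cases x; cases y; cases h2; cases h3; simpa using h
    · intro a ha
      simp only [mem_filter, mem_univ, true_and] at ha ⊢
      refine ⟨(a, _), ⟨ha, rfl⟩, rfl⟩

lemma card_filter_fst {α β : Type*} [Fintype β] [DecidableEq α] [Fintype α] (a : α) :
    (univ.filter fun x : α × β => x.1 = a).card = Fintype.card β := by
  have : (univ.filter fun x : α × β => x.1 = a) = {a} ×ˢ univ := by
    ext x; cases x; simp [eq_comm, and_comm]
  rw [this, card_product]; simp

lemma card_filter_fst' {α β γ : Type*} [Fintype β] [DecidableEq γ] [Fintype α]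
    (g : α → γ) (c : γ) :
    (univ.filter fun x : α × β => g x.1 = c).card
      = (Fintype.card β) * (univ.filter fun a : α => g a = c).card := by
  have : (univ.filter fun x : α × β => g x.1 = c) = (univ.filter fun a : α => g a = c) ×ˢ univ := by
    ext x; simp
  rw [this, card_product, card_univ]; ring

lemma filter_erase_card' {P A : Type*} [DecidableEq P] [DecidableEq A]
    (Q : Finset P) (p : P) (hp : p ∈ Q) (g : P → A) (a : A) :
    (Q.filter fun q => g q = a).card
      = ((Q.erase p).filter fun q => g q = a).card + (if a = g p then 1 else 0) := by
  conv_lhs => rw [← Finset.insert_erase hp]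
  rw [Finset.filter_insert]
  by_cases h : g p = a
  · rw [if_pos h, if_pos h.symm, Finset.card_insert_of_notMem (by simp)]
  · rw [if_neg h, if_neg (fun hh => h hh.symm), add_zero]

lemma orient {P A : Type*} [DecidableEq P] [DecidableEq A] (g0 g1 : P → A) :
    ∀ n (Q : Finset P), Q.card = n → ∀ x y : A,
    (∀ a, Even ((Q.filter fun p => g0 p = a).card + (Q.filter fun p => g1 p = a).card
        + (if a = x then 1 else 0) + (if a = y then 1 else 0))) →
    ∃ f : P → A, (∀ p ∈ Q, f p = g0 p ∨ f p = g1 p) ∧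
      ∀ a, 2 * (Q.filter fun p => f p = a).card + (if a = y then 1 else 0)
        = (Q.filter fun p => g0 p = a).card + (Q.filter fun p => g1 p = a).card
          + (if a = x then 1 else 0) := by
  intro n
  induction n using Nat.strong_induction_on with
  | _ n ih =>
    intro Q hQ x y hpar
    by_cases hxy : x = y
    · subst hxy
      rcases Finset.eq_empty_or_nonempty Q with hQe | ⟨p, hp⟩
      · subst hQe
        refine ⟨g0, fun p hp => absurd hp (by simp), fun a => by simp⟩
      · have hcard : (Q.erase p).card < n := by
          rw [← hQ]; exact Finset.card_erase_lt_of_mem hp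
        have hpar' : ∀ a, Even (((Q.erase p).filter fun q => g0 q = a).card
            + ((Q.erase p).filter fun q => g1 q = a).card
            + (if a = g1 p then 1 else 0) + (if a = g0 p then 1 else 0)) := by
          intro a
          have h0 := filter_erase_card' Q p hp g0 a
          have h1 := filter_erase_card' Q p hp g1 a
          have h := hpar a
          rw [Nat.even_iff] at h ⊢
          split_ifs at h0 h1 h ⊢ <;> omega
        obtain ⟨f', hf'1, hf'2⟩ := ih _ hcard (Q.erase p) rfl (g1 p) (g0 p) hpar'
        refine ⟨Function.update f' p (g0 p), ?_, ?_⟩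
        · intro q hq
          by_cases hqp : q = p
          · subst hqp; left; simp
          · rw [Function.update_of_ne hqp]; exact hf'1 q (Finset.mem_erase.2 ⟨hqp, hq⟩)
        · intro a
          have hc : (Q.filter fun q => Function.update f' p (g0 p) q = a).card
              = ((Q.erase p).filter fun q => f' q = a).card + (if a = g0 p then 1 else 0) := by
            rw [filter_erase_card' Q p hp (Function.update f' p (g0 p)) a]
            congr 2
            · apply Finset.filter_congr
              intro q hq
              rw [Function.update_of_ne (Finset.ne_of_mem_erase hq)]
            · rw [Function.update_self]
          have h0 := filter_erase_card' Q p hp g0 a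
          have h1 := filter_erase_card' Q p hp g1 a
          have h2 := hf'2 a
          rw [hc]
          split_ifs at h0 h1 h2 ⊢ <;> omega
    · -- x ≠ y : degree of x is odd hence positive; find an edge at x
      have hodd : ¬ Even ((Q.filter fun p => g0 p = x).card
          + (Q.filter fun p => g1 p = x).card) := by
        have h := hpar x
        rw [if_pos rfl, if_neg hxy] at h
        rw [Nat.even_iff] at h
        rw [Nat.even_iff]
        omega
      have hpos : 0 < (Q.filter fun p => g0 p = x).card + (Q.filter fun p => g1 p = x).card := by
        rcases Nat.eq_zero_or_pos ((Q.filter fun p => g0 p = x).card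
          + (Q.filter fun p => g1 p = x).card) with h | h
        · exact absurd (h ▸ Even.zero) hodd
        · exact h
      have hedge : ∃ p ∈ Q, g0 p = x ∨ g1 p = x := by
        rcases Nat.lt_or_ge 0 (Q.filter fun p => g0 p = x).card with h | h
        · obtain ⟨p, hp⟩ := Finset.card_pos.1 h
          rw [Finset.mem_filter] at hp
          exact ⟨p, hp.1, Or.inl hp.2⟩
        · have : 0 < (Q.filter fun p => g1 p = x).card := by omega
          obtain ⟨p, hp⟩ := Finset.card_pos.1 this
          rw [Finset.mem_filter] at hp
          exact ⟨p, hp.1, Or.inr hp.2⟩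
      obtain ⟨p, hp, hpe⟩ := hedge
      have hcard : (Q.erase p).card < n := by
        rw [← hQ]; exact Finset.card_erase_lt_of_mem hp
      rcases hpe with he | he
      · -- g0 p = x, other endpoint is g1 p
        have hpar' : ∀ a, Even (((Q.erase p).filter fun q => g0 q = a).card
            + ((Q.erase p).filter fun q => g1 q = a).card
            + (if a = g1 p then 1 else 0) + (if a = y then 1 else 0)) := by
          intro a
          have h0 := filter_erase_card' Q p hp g0 a
          have h1 := filter_erase_card' Q p hp g1 a
          rw [he] at h0
          have h := hpar a
          rw [Nat.even_iff] at h ⊢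
          split_ifs at h0 h1 h ⊢ <;> omega
        obtain ⟨f', hf'1, hf'2⟩ := ih _ hcard (Q.erase p) rfl (g1 p) y hpar'
        refine ⟨Function.update f' p x, ?_, ?_⟩
        · intro q hq
          by_cases hqp : q = p
          · subst hqp; left; rw [Function.update_self, he]
          · rw [Function.update_of_ne hqp]; exact hf'1 q (Finset.mem_erase.2 ⟨hqp, hq⟩)
        · intro a
          have hc : (Q.filter fun q => Function.update f' p x q = a).card
              = ((Q.erase p).filter fun q => f' q = a).card + (if a = x then 1 else 0) := by
            rw [filter_erase_card' Q p hp (Function.update f' p x) a]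
            congr 2
            · apply Finset.filter_congr
              intro q hq
              rw [Function.update_of_ne (Finset.ne_of_mem_erase hq)]
            · rw [Function.update_self]
          have h0 := filter_erase_card' Q p hp g0 a
          have h1 := filter_erase_card' Q p hp g1 a
          rw [he] at h0
          have h2 := hf'2 a
          rw [hc]
          split_ifs at h0 h1 h2 ⊢ <;> omega
      · -- g1 p = x, other endpoint is g0 p
        have hpar' : ∀ a, Even (((Q.erase p).filter fun q => g0 q = a).card
            + ((Q.erase p).filter fun q => g1 q = a).card
            + (if a = g0 p then 1 else 0) + (if a = y then 1 else 0)) := by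
          intro a
          have h0 := filter_erase_card' Q p hp g0 a
          have h1 := filter_erase_card' Q p hp g1 a
          rw [he] at h1
          have h := hpar a
          rw [Nat.even_iff] at h ⊢
          split_ifs at h0 h1 h ⊢ <;> omega
        obtain ⟨f', hf'1, hf'2⟩ := ih _ hcard (Q.erase p) rfl (g0 p) y hpar'
        refine ⟨Function.update f' p x, ?_, ?_⟩
        · intro q hq
          by_cases hqp : q = p
          · subst hqp; right; rw [Function.update_self, he]
          · rw [Function.update_of_ne hqp]; exact hf'1 q (Finset.mem_erase.2 ⟨hqp, hq⟩)
        · intro a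
          have hc : (Q.filter fun q => Function.update f' p x q = a).card
              = ((Q.erase p).filter fun q => f' q = a).card + (if a = x then 1 else 0) := by
            rw [filter_erase_card' Q p hp (Function.update f' p x) a]
            congr 2
            · apply Finset.filter_congr
              intro q hq
              rw [Function.update_of_ne (Finset.ne_of_mem_erase hq)]
            · rw [Function.update_self]
          have h0 := filter_erase_card' Q p hp g0 a
          have h1 := filter_erase_card' Q p hp g1 a
          rw [he] at h1
          have h2 := hf'2 a
          rw [hc]
          split_ifs at h0 h1 h2 ⊢ <;> omega

end Helpers

/-- An sGASP instance, given by the approval sets `S p ⊆ A × ℕ`, has a stable assignment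
if there is an assignment of participants to activities such that every participant
approves the pair consisting of her activity and the size of its group. -/
def GaspStable {P A : Type*} [Fintype P] [DecidableEq A] (S : P → Set (A × ℕ)) : Prop :=
  ∃ π : P → A, ∀ p : P,
    (π p, (Finset.univ.filter (fun q : P => π q = π p)).card) ∈ S p

/-- An sGASP instance `(P, A, (S_p))` has a stable assignment iff the derived
instance with `(2s|A|+1)·|A|` activity participants and `2|P|` pair participants (where
`s = |P| + 1`) has a stable assignment. -/
theorem sgasp_odd_reduction {P A : Type*} [Fintype P] [DecidableEq P]
    [Fintype A] [DecidableEq A]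
    (S : P → Set (A × ℕ))
    (s nA : ℕ) (hs : s = Fintype.card P + 1) (hnA : nA = Fintype.card A) :
    GaspStable S ↔
      GaspStable (P := (A × Fin (2 * s * nA + 1)) ⊕ (P × Fin 2)) (A := A)
        (Sum.elim
          -- activity participants associated to the activity `x.1`
          (fun x : A × Fin (2 * s * nA + 1) =>
            {y : A × ℕ | y.1 = x.1 ∧ Odd y.2 ∧
              2 * s * nA + 1 ≤ y.2 ∧ y.2 ≤ 2 * s * nA + 2 * s - 1})
          -- pair participants associated to the participant `x.1`
          (fun x : P × Fin 2 =>
            {y : A × ℕ | ∃ t : ℕ, (y.1, t) ∈ S x.1 ∧ y.2 = 2 * t + 2 * s * nA + 1})) := by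
  constructor
  · rintro ⟨π, hπ⟩
    refine ⟨Sum.elim (fun x => x.1) (fun x => π x.1), ?_⟩
    have hsize : ∀ a : A,
        (Finset.univ.filter fun q : (A × Fin (2 * s * nA + 1)) ⊕ (P × Fin 2) =>
          Sum.elim (fun x : A × Fin (2 * s * nA + 1) => x.1) (fun x : P × Fin 2 => π x.1) q
            = a).card
        = (2 * s * nA + 1) + 2 * (Finset.univ.filter fun p : P => π p = a).card := by
      intro a
      rw [card_filter_sum_ty]
      simp only [Sum.elim_inl, Sum.elim_inr]
      erw [card_filter_fst a, card_filter_fst' π a]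
      simp [Fintype.card_fin]
    intro q
    rcases q with ⟨a, i⟩ | ⟨p, j⟩
    · simp only [Sum.elim_inl, Set.mem_setOf_eq]
      erw [hsize a]
      have hle : (Finset.univ.filter fun p : P => π p = a).card ≤ Fintype.card P := by
        rw [← Finset.card_univ]; exact Finset.card_filter_le _ _
      have h2 : 2 * s * nA = 2 * (s * nA) := by ring
      refine ⟨by trivial, ?_, by omega, by omega⟩
      rw [Nat.odd_iff]; omega
    · simp only [Sum.elim_inr, Set.mem_setOf_eq]
      erw [hsize (π p)]
      exact ⟨(Finset.univ.filter fun q : P => π q = π p).card, hπ p, by ring⟩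
  · rintro ⟨πt, hπt⟩
    by_cases hP : Nonempty P
    swap
    · have hPe : IsEmpty P := not_nonempty_iff.1 hP
      exact ⟨fun p => isEmptyElim p, fun p => isEmptyElim p⟩
    have hinl : ∀ (a : A) (i : Fin (2 * s * nA + 1)), πt (Sum.inl (a, i)) = a := by
      intro a i
      have h := hπt (Sum.inl (a, i))
      simp only [Sum.elim_inl, Set.mem_setOf_eq] at h
      exact h.1
    set m : A → ℕ :=
      fun a => (Finset.univ.filter fun x : P × Fin 2 => πt (Sum.inr x) = a).card with hm
    have hsize : ∀ a : A,
        (Finset.univ.filter fun q => πt q = a).card = (2 * s * nA + 1) + m a := by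
      intro a
      rw [card_filter_sum_ty]
      congr 1
      have h : (Finset.univ.filter fun x : A × Fin (2 * s * nA + 1) => πt (Sum.inl x) = a)
          = (Finset.univ.filter fun x : A × Fin (2 * s * nA + 1) => x.1 = a) := by
        apply Finset.filter_congr
        intro x _
        rcases x with ⟨b, i⟩
        rw [hinl b i]
      rw [h, card_filter_fst a, Fintype.card_fin]
    have hm2 : ∀ a, m a = (Finset.univ.filter fun p : P => πt (Sum.inr (p, 0)) = a).card
        + (Finset.univ.filter fun p : P => πt (Sum.inr (p, 1)) = a).card := by
      intro a
      exact card_filter_prod_two (fun x => πt (Sum.inr x) = a)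
    have heven : ∀ a, Even (m a) := by
      intro a
      have h := hπt (Sum.inl (a, ⟨0, by omega⟩))
      simp only [Sum.elim_inl, Set.mem_setOf_eq] at h
      obtain ⟨-, hodd, -, -⟩ := h
      rw [hinl] at hodd
      rw [hsize a] at hodd
      rw [Nat.odd_iff] at hodd
      rw [Nat.even_iff]
      have h2 : 2 * s * nA = 2 * (s * nA) := by ring
      omega
    have hpair : ∀ (p : P) (j : Fin 2), ∃ t, (πt (Sum.inr (p, j)), t) ∈ S p ∧
        m (πt (Sum.inr (p, j))) = 2 * t := by
      intro p j
      have h := hπt (Sum.inr (p, j))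
      simp only [Sum.elim_inr, Set.mem_setOf_eq] at h
      obtain ⟨t, ht1, ht2⟩ := h
      refine ⟨t, ht1, ?_⟩
      rw [hsize (πt (Sum.inr (p, j)))] at ht2
      omega
    obtain ⟨p₀⟩ := hP
    set g0 : P → A := fun p => πt (Sum.inr (p, 0)) with hg0
    set g1 : P → A := fun p => πt (Sum.inr (p, 1)) with hg1
    have hpar : ∀ a, Even ((Finset.univ.filter fun p => g0 p = a).card
        + (Finset.univ.filter fun p => g1 p = a).card
        + (if a = g0 p₀ then 1 else 0) + (if a = g0 p₀ then 1 else 0)) := by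
      intro a
      have h1 := heven a
      rw [hm2 a] at h1
      simp only [hg0, hg1]
      rw [Nat.even_iff] at h1 ⊢
      split_ifs <;> omega
    obtain ⟨f, hf1, hf2⟩ := orient g0 g1 _ Finset.univ rfl (g0 p₀) (g0 p₀) hpar
    have hc : ∀ a, 2 * (Finset.univ.filter fun q => f q = a).card = m a := by
      intro a
      have h := hf2 a
      have h1 := hm2 a
      simp only [hg0, hg1] at h
      split_ifs at h <;> omega
    refine ⟨f, ?_⟩
    intro p
    rcases hf1 p (Finset.mem_univ p) with he | he
    · obtain ⟨t, ht1, ht2⟩ := hpair p 0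
      have h2 := hc (πt (Sum.inr (p, 0)))
      rw [ht2] at h2
      simp only [hg0] at he
      rw [he]
      have hct : (Finset.univ.filter fun q => f q = πt (Sum.inr (p, 0))).card = t := by omega
      rw [hct]
      exact ht1
    · obtain ⟨t, ht1, ht2⟩ := hpair p 1
      have h2 := hc (πt (Sum.inr (p, 1)))
      rw [ht2] at h2
      simp only [hg1] at he
      rw [he]
      have hct : (Finset.univ.filter fun q => f q = πt (Sum.inr (p, 1))).card = t := by omega
      rw [hct]
      exact ht1
end
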